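/- arXiv:1909.13406 — 8 statements merged into one kernel-verified Lean document; each statement's English description precedes it below -/
import Mathlib

section
/- Let C ⊆ 2^{[n]} be a simplicial complex (a code closed under taking subsets, with ∅ ∈ C) and let d ≥ 0. Then C has a closed convex realization in ℝ^d if and only if C has an open convex realization in ℝ^d. (Consequently the closed and open embedding dimensions of a simplicial complex coincide.) -/
/-!
For a simplicial complex the code of a cover coincides with its nerve, so a realization may be
perturbed freely as long as each codeword keeps a witness point with the same support and no new
nonempty intersections appear. Eroding open convex sets by a small `ε` gives closed convex sets
with both properties; conversely, closed convex sets are first cut down to a large ball (keeping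
every witness) and then thickened by a small `ε`, which gives open convex sets; compactness of the
truncated sets is what keeps empty intersections empty under small thickenings.
-/

/-- The combinatorial code of a collection of sets `U` in `X`: the set of
all `σ ⊆ [n]` such that some point `x ∈ X` lies in exactly the `U i` with `i ∈ σ`. -/
def codeOf {n : ℕ} {X : Type*} (U : Fin n → Set X) : Set (Finset (Fin n)) :=
  {σ | ∃ x : X, ∀ i, i ∈ σ ↔ x ∈ U i}

/-- `C` has a realization by convex open sets in `ℝ^d`. -/
def HasOpenRealization (n : ℕ) (C : Set (Finset (Fin n))) (d : ℕ) : Prop :=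
  ∃ U : Fin n → Set (EuclideanSpace ℝ (Fin d)),
    (∀ i, Convex ℝ (U i)) ∧ (∀ i, IsOpen (U i)) ∧ codeOf U = C

/-- `C` has a realization by convex closed sets in `ℝ^d`. -/
def HasClosedRealization (n : ℕ) (C : Set (Finset (Fin n))) (d : ℕ) : Prop :=
  ∃ U : Fin n → Set (EuclideanSpace ℝ (Fin d)),
    (∀ i, Convex ℝ (U i)) ∧ (∀ i, IsClosed (U i)) ∧ codeOf U = C

open Filter Metric Set Topology

def nerve {X ι : Type*} (U : ι → Set X) : Set (Finset ι) :=
  {σ | (⋂ i ∈ σ, U i).Nonempty}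

def erosion {X : Type*} [PseudoMetricSpace X] (ε : ℝ) (s : Set X) : Set X :=
  {x | ball x ε ⊆ s}

section Codes

variable {n : ℕ} {X : Type*}

theorem codeOf_subset_nerve (U : Fin n → Set X) : codeOf U ⊆ nerve U :=
  fun _ ⟨x, hx⟩ => ⟨x, mem_iInter₂.2 fun i hi => (hx i).1 hi⟩

theorem nerve_mono {ι : Type*} {U V : ι → Set X} (h : ∀ i, V i ⊆ U i) : nerve V ⊆ nerve U :=
  fun _ hσ => hσ.mono (iInter₂_mono fun i _ => h i)

theorem nerve_subset_of_codeOf_subset {C : Set (Finset (Fin n))}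
    (hC : ∀ c ∈ C, ∀ τ ⊆ c, τ ∈ C) {U : Fin n → Set X} (hU : codeOf U ⊆ C) : nerve U ⊆ C := by
  classical
  rintro σ ⟨x, hx⟩
  refine hC {i | x ∈ U i} (hU ⟨x, fun i => ?_⟩) σ fun i hi => ?_
  · simp
  · simpa using mem_iInter₂.1 hx i hi

theorem codeOf_eq_of_nerve_subset {C : Set (Finset (Fin n))} (hC : ∀ c ∈ C, ∀ τ ⊆ c, τ ∈ C)
    {U V : Fin n → Set X} (hU : codeOf U = C) (hnerve : nerve V ⊆ nerve U)
    (hcode : C ⊆ codeOf V) : codeOf V = C :=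
  ((codeOf_subset_nerve V).trans <|
    hnerve.trans <| nerve_subset_of_codeOf_subset hC hU.le).antisymm hcode

theorem eventually_codeOf_subset {α : Type*} {l : Filter α} {U : Fin n → Set X}
    {V : α → Fin n → Set X} (h : ∀ x i, ∀ᶠ a in l, x ∈ V a i ↔ x ∈ U i) :
    ∀ᶠ a in l, codeOf U ⊆ codeOf (V a) := by
  have hσ : ∀ σ ∈ codeOf U, ∀ᶠ a in l, σ ∈ codeOf (V a) := by
    rintro σ ⟨x, hx⟩
    filter_upwards [eventually_all.2 (h x)] with a ha
    exact ⟨x, fun i => (hx i).trans (ha i).symm⟩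
  exact ((toFinite _).eventually_all.2 hσ).mono fun _ ha _ => ha _

end Codes

section Erosion

variable {X : Type*} [PseudoMetricSpace X] {ε : ℝ} {s : Set X}

theorem erosion_subset (hε : 0 < ε) : erosion ε s ⊆ s :=
  fun _ hx => hx (mem_ball_self hε)

theorem compl_erosion : (erosion ε s)ᶜ = thickening ε sᶜ := by
  ext
  simp [erosion, mem_thickening_iff, not_subset, dist_comm, and_comm]

theorem isClosed_erosion : IsClosed (erosion ε s) := by
  rw [← isOpen_compl_iff, compl_erosion]
  exact isOpen_thickening

theorem IsOpen.eventually_mem_erosion_iff (hs : IsOpen s) (x : X) :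
    ∀ᶠ ε in 𝓝[>] 0, x ∈ erosion ε s ↔ x ∈ s := by
  by_cases hx : x ∈ s
  · obtain ⟨δ, hδ, hball⟩ := isOpen_iff.1 hs x hx
    filter_upwards [Ioo_mem_nhdsGT hδ] with ε hε
    exact iff_of_true ((ball_subset_ball hε.2.le).trans hball) hx
  · filter_upwards [self_mem_nhdsWithin] with ε hε
    exact iff_of_false (fun h => hx (erosion_subset hε h)) hx

theorem Convex.erosion {E : Type*} [SeminormedAddCommGroup E] [NormedSpace ℝ E] {s : Set E}
    (hs : Convex ℝ s) (ε : ℝ) : Convex ℝ (_root_.erosion ε s) := by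
  have h : _root_.erosion ε s = ⋂ v ∈ ball (0 : E) ε, (fun x => v + x) ⁻¹' s := by
    ext x
    simp only [_root_.erosion, mem_ofPred_eq, mem_iInter, mem_preimage, subset_def,
      mem_ball_iff_norm, sub_zero]
    exact ⟨fun h v hv => h _ (by simpa using hv), fun h y hy => by simpa using h _ hy⟩
  rw [h]
  exact convex_iInter₂ fun v _ => hs.translate_preimage_right v

end Erosion

section Thickening

variable {X : Type*}

theorem IsClosed.eventually_mem_thickening_iff [PseudoMetricSpace X] {s : Set X}
    (hs : IsClosed s) (x : X) : ∀ᶠ ε in 𝓝[>] 0, x ∈ thickening ε s ↔ x ∈ s := by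
  by_cases hx : x ∈ s
  · filter_upwards [self_mem_nhdsWithin] with ε hε
    exact iff_of_true (self_subset_thickening hε s hx) hx
  · rw [← hs.closure_eq, closure_eq_iInter_thickening] at hx
    obtain ⟨δ, hδ, hxδ⟩ : ∃ δ, 0 < δ ∧ x ∉ thickening δ s := by simpa using hx
    filter_upwards [Ioo_mem_nhdsGT hδ] with ε hε
    exact iff_of_false (fun h => hxδ (thickening_mono hε.2.le s h))
      fun h => hxδ (self_subset_thickening hδ s h)

theorem eventually_biInter_thickening_eq_empty [MetricSpace X] {ι : Type*} {s : Finset ι}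
    {V : ι → Set X} (hV : ∀ i ∈ s, IsCompact (V i)) (h : ⋂ i ∈ s, V i = ∅) :
    ∀ᶠ ε in 𝓝[>] 0, ⋂ i ∈ s, thickening ε (V i) = ∅ := by
  rcases s.eq_empty_or_nonempty with rfl | ⟨i₀, hi₀⟩
  · simp_all
  let t : Ioi (0 : ℝ) → Set X := fun δ => ⋂ i ∈ s, cthickening δ (V i)
  have hlim : V i₀ ∩ ⋂ δ, t δ = ∅ := by
    refine eq_empty_of_forall_notMem fun x ⟨_, hx⟩ => ?_
    refine (eq_empty_iff_forall_notMem.1 h) x (mem_iInter₂.2 fun i hi => ?_)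
    rw [← (hV i hi).isClosed.closure_eq, closure_eq_iInter_cthickening]
    exact mem_iInter₂.2 fun δ hδ => mem_iInter₂.1 (mem_iInter.1 hx ⟨δ, hδ⟩) i hi
  have hdir : Directed (· ⊇ ·) t := Monotone.directed_ge fun δ δ' hδ =>
    iInter₂_mono fun i _ => cthickening_mono (Subtype.coe_le_coe.2 hδ) (V i)
  obtain ⟨δ, hδ⟩ := (hV i₀ hi₀).elim_directed_family_closed t
    (fun δ => isClosed_biInter fun i _ => isClosed_cthickening) hlim hdir
  -- A point common to all `ε`-thickenings is `ε`-close to some `y ∈ V i₀`, which then lies in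
  -- every `2ε`-thickening.
  filter_upwards [Ioo_mem_nhdsGT (half_pos δ.2)] with ε hε
  refine eq_empty_of_forall_notMem fun x hx => ?_
  obtain ⟨y, hy, hxy⟩ := mem_thickening_iff.1 (mem_iInter₂.1 hx i₀ hi₀)
  refine (eq_empty_iff_forall_notMem.1 hδ) y ⟨hy, mem_iInter₂.2 fun i hi => ?_⟩
  have hy2 : y ∈ thickening (ε + ε) (V i) :=
    thickening_thickening_subset ε ε (V i)
      (mem_thickening_iff.2 ⟨x, mem_iInter₂.1 hx i hi, by rwa [dist_comm]⟩)
  exact thickening_subset_cthickening _ _ (thickening_mono (by linarith [hε.2]) _ hy2)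

theorem eventually_nerve_thickening_subset [MetricSpace X] {ι : Type*} [Finite ι]
    {U : ι → Set X} (hU : ∀ i, IsCompact (U i)) :
    ∀ᶠ ε in 𝓝[>] 0, nerve (fun i => thickening ε (U i)) ⊆ nerve U := by
  have hσ : ∀ σ : Finset ι, ∀ᶠ ε in 𝓝[>] 0,
      σ ∉ nerve U → σ ∉ nerve fun i => thickening ε (U i) := by
    intro σ
    by_cases hσ : σ ∈ nerve U
    · exact .of_forall fun _ h => absurd hσ h
    filter_upwards [eventually_biInter_thickening_eq_empty (fun i _ => hU i)
      (not_nonempty_iff_eq_empty.1 hσ)] with ε hε _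
    show ¬(⋂ i ∈ σ, thickening ε (U i)).Nonempty
    rw [hε]
    exact not_nonempty_empty
  filter_upwards [eventually_all.2 hσ] with ε hε σ
  exact not_imp_not.1 (hε σ)

end Thickening

theorem eventually_mem_inter_closedBall_iff {E : Type*} [SeminormedAddGroup E] (s : Set E)
    (x : E) : ∀ᶠ R in atTop, x ∈ s ∩ closedBall 0 R ↔ x ∈ s := by
  filter_upwards [eventually_ge_atTop ‖x‖] with R hR
  exact and_iff_left (mem_closedBall_zero_iff.2 hR)

theorem simplicialComplex_closed_iff_open_general {n d : ℕ} (C : Set (Finset (Fin n)))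
    (hsimp : ∀ c ∈ C, ∀ τ ⊆ c, τ ∈ C) :
    HasClosedRealization n C d ↔ HasOpenRealization n C d := by
  constructor
  · rintro ⟨U, hconv, hclosed, hU⟩
    obtain ⟨R, hR⟩ := (eventually_codeOf_subset fun x i =>
      eventually_mem_inter_closedBall_iff (U i) x).exists
    set K := fun i => U i ∩ closedBall 0 R
    have hK : codeOf K = C :=
      codeOf_eq_of_nerve_subset hsimp hU (nerve_mono fun _ => inter_subset_left) (hU ▸ hR)
    have hKc : ∀ i, IsCompact (K i) := fun i => (isCompact_closedBall 0 R).inter_left (hclosed i)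
    obtain ⟨ε, hcode, hnerve⟩ := ((eventually_codeOf_subset fun x i =>
      (hKc i).isClosed.eventually_mem_thickening_iff x).and
      (eventually_nerve_thickening_subset hKc)).exists
    exact ⟨_, fun i => ((hconv i).inter (convex_closedBall 0 R)).thickening ε,
      fun _ => isOpen_thickening, codeOf_eq_of_nerve_subset hsimp hK hnerve (hK ▸ hcode)⟩
  · rintro ⟨U, hconv, hopen, hU⟩
    obtain ⟨ε, hcode, hε⟩ := ((eventually_codeOf_subset fun x i =>
      (hopen i).eventually_mem_erosion_iff x).and self_mem_nhdsWithin).exists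
    exact ⟨_, fun i => (hconv i).erosion ε, fun _ => isClosed_erosion,
      codeOf_eq_of_nerve_subset hsimp hU (nerve_mono fun _ => erosion_subset hε) (hU ▸ hcode)⟩

/-- For a simplicial complex (a code closed under taking subsets, containing `∅`),
a closed convex realization in `ℝ^d` exists iff an open convex realization in `ℝ^d` exists. -/
theorem simplicialComplex_closed_iff_open {n d : ℕ} (C : Set (Finset (Fin n)))
    (hempty : ∅ ∈ C) (hsimp : ∀ c ∈ C, ∀ τ ⊆ c, τ ∈ C) :
    HasClosedRealization n C d ↔ HasOpenRealization n C d :=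
  simplicialComplex_closed_iff_open_general C hsimp
end

section
/- Let n ≥ 2 and let C ⊆ 2^{[n]} be an intersection complete code containing at least one nonempty codeword, and let d + 1 be the maximum cardinality of a codeword of C (i.e. d = dim Δ(C)). Then C has a closed convex realization in ℝ^m, where m = min{2d+1, n−1}. -/
/-!
Place a point `x c ∈ ℝ^(m+1)` for each nonempty codeword `c`, lying on the hyperplane `ℓ i = 1`
for `i ∈ c` and strictly below it otherwise. On the polytope `P = conv {x c}` a constraint
`ℓ i ≤ 1` is tight at a convex combination exactly when it is tight at every point of positive
weight, so the set of tight constraints at any point of `P` is an intersection of codewords, hence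
in `C`; thus the faces `P ∩ {ℓ i = 1}` realize `C`. The origin lies strictly inside every
half-space `ℓ i ≤ 1`, so no ray from it meets the union of these faces twice, and the central
projection from the origin onto a hyperplane maps the faces to compact convex sets in `ℝ^m` with
the same code.

For `m = n - 1` the points are the indicator vectors of the codewords. For `m = 2d + 1` take
`ℓ i` to be pairing with the point `(tᵢ, tᵢ², …, tᵢ^(2d+2))` of the moment curve and let `x c`
encode the polynomial `∏_{j ∈ c} (1 - s/tⱼ)²` of degree at most `2d + 2`, so that
`1 - ℓ i (x c)` is its value at `tᵢ`: nonnegative, and zero exactly when `i ∈ c`.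
-/

open Module

theorem exists_ker_inf_ker_eq_bot {K E F : Type*} [Field K] [AddCommGroup E] [Module K E]
    [FiniteDimensional K E] [AddCommGroup F] [Module K F] [FiniteDimensional K F]
    {φ : E →ₗ[K] K} (hφ : φ ≠ 0) (hE : finrank K E = finrank K F + 1) :
    ∃ A : E →ₗ[K] F, LinearMap.ker A ⊓ LinearMap.ker φ = ⊥ := by
  have hrange : finrank K (LinearMap.range φ) = 1 := by
    rw [LinearMap.range_eq_top.2 (LinearMap.surjective_of_ne_zero hφ), finrank_top,
      finrank_self]
  have hker : finrank K (LinearMap.ker φ) = finrank K F := by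
    have := φ.finrank_range_add_finrank_ker
    omega
  obtain ⟨A, hA⟩ := LinearMap.exists_extend (LinearEquiv.ofFinrankEq _ _ hker).toLinearMap
  refine ⟨A, eq_bot_iff.2 fun w ⟨hAw, hφw⟩ => ?_⟩
  have : LinearEquiv.ofFinrankEq _ _ hker ⟨w, hφw⟩ = 0 := by
    rw [← LinearEquiv.coe_coe, ← hA]
    exact hAw
  simpa using this

section Perspective

variable {E F : Type*} [AddCommGroup E] [Module ℝ E] [AddCommGroup F] [Module ℝ F]
  {φ : E →ₗ[ℝ] ℝ} {A : E →ₗ[ℝ] F}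

/-- Central projection from the origin onto the hyperplane `φ = 1`, read in coordinates `A`. -/
noncomputable def perspective (φ : E →ₗ[ℝ] ℝ) (A : E →ₗ[ℝ] F) (p : E) : F := (φ p)⁻¹ • A p

theorem perspective_image_eq {S : Set E} (hS : Convex ℝ S) (hφ : ∀ p ∈ S, 0 < φ p) :
    perspective φ A '' S = A '' (ConvexCone.hull ℝ S ∩ φ ⁻¹' {1}) := by
  ext y
  constructor
  · rintro ⟨p, hp, rfl⟩
    have hp₀ := (hφ p hp).ne'
    refine ⟨(φ p)⁻¹ • p, ⟨(ConvexCone.mem_hull_of_convex hS).2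
      ⟨_, inv_pos.2 (hφ p hp), Set.smul_mem_smul_set hp⟩, ?_⟩, ?_⟩
    · simp [inv_mul_cancel₀ hp₀]
    · simp [perspective]
  · rintro ⟨_, ⟨hw, hφw⟩, rfl⟩
    obtain ⟨r, -, p, hp, rfl⟩ := (ConvexCone.mem_hull_of_convex hS).1 hw
    have hr : r = (φ p)⁻¹ := by
      simp only [Set.mem_preimage, map_smul, smul_eq_mul, Set.mem_singleton_iff] at hφw
      exact eq_inv_of_mul_eq_one_left hφw
    exact ⟨p, hp, by simp [perspective, hr]⟩

theorem Convex.perspective_image {S : Set E} (hS : Convex ℝ S) (hφ : ∀ p ∈ S, 0 < φ p) :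
    Convex ℝ (perspective φ A '' S) := by
  rw [perspective_image_eq hS hφ]
  exact ((ConvexCone.hull ℝ S).convex.inter ((convex_singleton 1).linear_preimage φ)).linear_image A

theorem smul_eq_smul_of_perspective_eq (hA : LinearMap.ker A ⊓ LinearMap.ker φ = ⊥) {p q : E}
    (hp : φ p ≠ 0) (hq : φ q ≠ 0) (h : perspective φ A p = perspective φ A q) :
    φ q • p = φ p • q := by
  rw [← sub_eq_zero]
  refine (Submodule.eq_bot_iff _).1 hA _ ⟨?_, ?_⟩
  · have := congrArg ((φ p * φ q) • ·) h
    simp only [perspective, smul_smul] at this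
    rw [SetLike.mem_coe, LinearMap.mem_ker, map_sub, map_smul, map_smul, sub_eq_zero]
    field_simp at this
    exact this
  · simp [mul_comm]

theorem eq_of_perspective_eq (hA : LinearMap.ker A ⊓ LinearMap.ker φ = ⊥) {ℓ ℓ' : E →ₗ[ℝ] ℝ}
    {p q : E} (hp : 0 < φ p) (hq : 0 < φ q) (hℓp : ℓ p = 1) (hℓq : ℓ q ≤ 1)
    (hℓ'p : ℓ' p ≤ 1) (hℓ'q : ℓ' q = 1) (h : perspective φ A p = perspective φ A q) :
    p = q := by
  have key := smul_eq_smul_of_perspective_eq hA hp.ne' hq.ne' h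
  have h₁ := congrArg ℓ key
  have h₂ := congrArg ℓ' key
  simp only [map_smul, smul_eq_mul, hℓp, hℓ'q] at h₁ h₂
  have hφ : φ p = φ q := by nlinarith
  rw [hφ] at key
  exact smul_right_injective E hq.ne' key

theorem injOn_perspective_faces {ι : Type*} (hA : LinearMap.ker A ⊓ LinearMap.ker φ = ⊥)
    {ℓ : ι → E →ₗ[ℝ] ℝ} {P : Set E} (hφ : ∀ p ∈ P, 0 < φ p) (hℓ : ∀ p ∈ P, ∀ i, ℓ i p ≤ 1) :
    Set.InjOn (perspective φ A) (⋃ i, P ∩ {p | ℓ i p = 1}) := by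
  rintro p hp q hq h
  obtain ⟨i, hpP, hpi⟩ := Set.mem_iUnion.1 hp
  obtain ⟨j, hqP, hqj⟩ := Set.mem_iUnion.1 hq
  exact eq_of_perspective_eq hA (hφ p hpP) (hφ q hqP) hpi (hℓ q hqP i) (hℓ p hpP j) hqj h

end Perspective

theorem codeOf_image_eq_insert {n : ℕ} {X Y : Type*} {U : Fin n → Set X} {f : X → Y}
    (hf : Set.InjOn f (⋃ i, U i)) (hy : ∃ y, ∀ i, y ∉ f '' U i) :
    codeOf (fun i => f '' U i) = insert ∅ (codeOf U) := by
  ext σ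
  rw [Set.mem_insert_iff]
  constructor
  · rintro ⟨y, hσ⟩
    by_cases hcov : ∃ i, y ∈ f '' U i
    · obtain ⟨i₀, p, hp, rfl⟩ := hcov
      exact Or.inr ⟨p, fun i => (hσ i).trans
        (hf.mem_image_iff (Set.subset_iUnion U i) (Set.mem_iUnion.2 ⟨i₀, hp⟩))⟩
    · simp only [not_exists] at hcov
      exact Or.inl (Finset.eq_empty_of_forall_notMem fun i hi => hcov i ((hσ i).1 hi))
  · intro hσ
    obtain rfl | ⟨i₀, hi₀⟩ := σ.eq_empty_or_nonempty
    · obtain ⟨y, hy⟩ := hy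
      exact ⟨y, by simpa using hy⟩
    · obtain ⟨p, hσ⟩ := hσ.resolve_left (Finset.ne_empty_of_mem hi₀)
      exact ⟨f p, fun i => (hσ i).trans (hf.mem_image_iff (Set.subset_iUnion U i)
        (Set.mem_iUnion.2 ⟨i₀, (hσ i₀).1 hi₀⟩)).symm⟩

section ActiveSet

variable {n : ℕ} {E : Type*} [AddCommGroup E] [Module ℝ E] {ℓ : Fin n → E →ₗ[ℝ] ℝ}

noncomputable def activeSet (ℓ : Fin n → E →ₗ[ℝ] ℝ) (p : E) : Finset (Fin n) :=
  {i | ℓ i p = 1}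

@[simp]
theorem mem_activeSet {p : E} {i : Fin n} : i ∈ activeSet ℓ p ↔ ℓ i p = 1 := by
  simp [activeSet]

theorem activeSet_mem_of_mem_convexHull {C : Set (Finset (Fin n))}
    (hIC : ∀ c₁ ∈ C, ∀ c₂ ∈ C, c₁ ∩ c₂ ∈ C) {S : Set E} (hS : ∀ y ∈ S, activeSet ℓ y ∈ C)
    (hle : ∀ y ∈ S, ∀ i, ℓ i y ≤ 1) {p : E} (hp : p ∈ convexHull ℝ S) : activeSet ℓ p ∈ C := by
  classical
  obtain ⟨ι, _, w, z, hw₀, hw₁, hzS, rfl⟩ := mem_convexHull_iff_exists_fintype.1 hp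
  set t := Finset.univ.filter (fun j => w j ≠ 0)
  have ht : t.Nonempty := by
    by_contra h
    rw [Finset.not_nonempty_iff_eq_empty, Finset.filter_eq_empty_iff] at h
    simp_all
  convert Finset.inf'_mem C hIC t ht (fun j => activeSet ℓ (z j)) fun j _ => hS _ (hzS j)
    using 1
  ext i
  have hslack : 1 - ℓ i (∑ j, w j • z j) = ∑ j, w j * (1 - ℓ i (z j)) := by
    simp [map_sum, mul_sub, Finset.sum_sub_distrib, hw₁]
  have hnonneg : ∀ j ∈ Finset.univ, 0 ≤ w j * (1 - ℓ i (z j)) :=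
    fun j _ => mul_nonneg (hw₀ j) (sub_nonneg.2 (hle _ (hzS j) i))
  rw [Finset.mem_inf', mem_activeSet, eq_comm, ← sub_eq_zero, hslack,
    Finset.sum_eq_zero_iff_of_nonneg hnonneg]
  refine forall_congr' fun j => ?_
  simp [t, mul_eq_zero, sub_eq_zero, or_iff_not_imp_left, eq_comm (a := (1 : ℝ))]

theorem insert_empty_codeOf_faces {C : Set (Finset (Fin n))} (hempty : ∅ ∈ C) {P : Set E}
    (hP : ∀ p ∈ P, activeSet ℓ p ∈ C) (hC : ∀ c ∈ C, c ≠ ∅ → ∃ p ∈ P, activeSet ℓ p = c) :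
    insert ∅ (codeOf fun i => P ∩ {p | ℓ i p = 1}) = C := by
  ext σ
  constructor
  · rintro (rfl | ⟨p, hσ⟩)
    · exact hempty
    · by_cases hp : p ∈ P
      · convert hP p hp
        ext i
        simp [hσ i, hp]
      · convert hempty
        ext i
        simp [hσ i, hp]
  · intro hσ
    obtain rfl | hσ₀ := eq_or_ne σ ∅
    · exact Or.inl rfl
    · obtain ⟨p, hp, rfl⟩ := hC σ hσ hσ₀
      exact Or.inr ⟨p, fun i => by simp [hp]⟩

end ActiveSet

theorem hasClosedRealization_of_functionals {n m : ℕ} {E : Type*} [NormedAddCommGroup E]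
    [NormedSpace ℝ E] [FiniteDimensional ℝ E] (hm : 0 < m) (hE : finrank ℝ E = m + 1)
    {C : Set (Finset (Fin n))} (hempty : ∅ ∈ C) (hIC : ∀ c₁ ∈ C, ∀ c₂ ∈ C, c₁ ∩ c₂ ∈ C)
    (x : Finset (Fin n) → E) (ℓ : Fin n → E →ₗ[ℝ] ℝ) (φ : E →ₗ[ℝ] ℝ) (hφ : φ ≠ 0)
    (hle : ∀ c ∈ C, c ≠ ∅ → ∀ i, ℓ i (x c) ≤ 1)
    (hact : ∀ c ∈ C, c ≠ ∅ → activeSet ℓ (x c) = c)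
    (hpos : ∀ c ∈ C, c ≠ ∅ → 0 < φ (x c)) :
    HasClosedRealization n C m := by
  obtain ⟨A, hA⟩ :=
    exists_ker_inf_ker_eq_bot (F := EuclideanSpace ℝ (Fin m)) hφ (by simpa using hE)
  set S := x '' {c | c ∈ C ∧ c ≠ ∅}
  set P := convexHull ℝ S
  have hSle : ∀ y ∈ S, ∀ i, ℓ i y ≤ 1 := by
    rintro _ ⟨c, ⟨hc, hc₀⟩, rfl⟩
    exact hle c hc hc₀
  have hPle : ∀ p ∈ P, ∀ i, ℓ i p ≤ 1 := fun p hp i =>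
    convexHull_min (fun y hy => hSle y hy i) ((convex_Iic 1).linear_preimage (ℓ i)) hp
  have hPpos : ∀ p ∈ P, 0 < φ p := by
    refine fun p hp => convexHull_min ?_ ((convex_Ioi 0).linear_preimage φ) hp
    rintro _ ⟨c, ⟨hc, hc₀⟩, rfl⟩
    exact hpos c hc hc₀
  have hPact : ∀ p ∈ P, activeSet ℓ p ∈ C := by
    refine fun p hp => activeSet_mem_of_mem_convexHull hIC ?_ hSle hp
    rintro _ ⟨c, ⟨hc, hc₀⟩, rfl⟩
    rwa [hact c hc hc₀]
  have hcont : ContinuousOn (perspective φ A) P :=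
    (φ.continuous_of_finiteDimensional.continuousOn.inv₀ fun p hp => (hPpos p hp).ne').smul
      A.continuous_of_finiteDimensional.continuousOn
  have hcpt : ∀ i, IsCompact (perspective φ A '' (P ∩ {p | ℓ i p = 1})) := fun i =>
    ((((Set.toFinite _).image x).isCompact_convexHull ℝ).inter_right
      (isClosed_eq (ℓ i).continuous_of_finiteDimensional continuous_const)).image_of_continuousOn
      (hcont.mono Set.inter_subset_left)
  have : Nonempty (Fin m) := ⟨⟨0, hm⟩⟩
  obtain ⟨y, hy⟩ := (Set.ne_univ_iff_exists_notMem _).1 (isCompact_iUnion hcpt).ne_univ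
  refine ⟨fun i => perspective φ A '' (P ∩ {p | ℓ i p = 1}), fun i =>
    ((convex_convexHull ℝ S).inter ((convex_singleton 1).linear_preimage (ℓ i))).perspective_image
      fun p hp => hPpos p hp.1, fun i => (hcpt i).isClosed, ?_⟩
  rw [codeOf_image_eq_insert (injOn_perspective_faces hA hPpos hPle)
    ⟨y, fun i hi => hy (Set.mem_iUnion.2 ⟨i, hi⟩)⟩]
  exact insert_empty_codeOf_faces hempty hPact fun c hc hc₀ =>
    ⟨x c, subset_convexHull ℝ S ⟨c, ⟨hc, hc₀⟩, rfl⟩, hact c hc hc₀⟩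

theorem hasClosedRealization_sub_one {n : ℕ} (hn : 2 ≤ n) {C : Set (Finset (Fin n))}
    (hempty : ∅ ∈ C) (hIC : ∀ c₁ ∈ C, ∀ c₂ ∈ C, c₁ ∩ c₂ ∈ C) :
    HasClosedRealization n C (n - 1) := by
  refine hasClosedRealization_of_functionals (E := Fin n → ℝ) (by omega)
    (by rw [finrank_fin_fun]; omega) hempty hIC (fun c i => if i ∈ c then 1 else 0)
    LinearMap.proj (Fintype.linearCombination ℝ 1) ?_ ?_ ?_ ?_
  · intro h
    have := LinearMap.congr_fun h (Pi.single ⟨0, by omega⟩ 1)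
    simp at this
  · intro c _ _ i
    simp only [LinearMap.coe_proj, Function.eval]
    split_ifs <;> norm_num
  · intro c _ _
    ext i
    simp
  · intro c _ hc₀
    simpa [Fintype.linearCombination_apply, Finset.nonempty_iff_ne_empty] using hc₀

section MomentCurve

open Polynomial

noncomputable def momentFunctional (N : ℕ) (s : ℝ) : (Fin N → ℝ) →ₗ[ℝ] ℝ :=
  Fintype.linearCombination ℝ fun k : Fin N => s ^ ((k : ℕ) + 1)

theorem momentFunctional_neg_coeff {N : ℕ} {q : ℝ[X]} (hq : q.natDegree ≤ N)
    (hq₀ : q.coeff 0 = 1) (s : ℝ) :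
    momentFunctional N s (fun k => -q.coeff (k + 1)) = 1 - q.eval s := by
  rw [eval_eq_sum_range' (Nat.lt_succ_of_le hq), Finset.sum_range_succ',
    ← Fin.sum_univ_eq_sum_range (fun k => q.coeff (k + 1) * s ^ (k + 1))]
  simp [momentFunctional, Fintype.linearCombination_apply, hq₀]

variable {ι : Type*}

noncomputable def doubleRootPoly (t : ι → ℝ) (c : Finset ι) : ℝ[X] :=
  ∏ j ∈ c, (1 - C (t j)⁻¹ * X) ^ 2

theorem eval_doubleRootPoly (t : ι → ℝ) (c : Finset ι) (s : ℝ) :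
    (doubleRootPoly t c).eval s = ∏ j ∈ c, (1 - s / t j) ^ 2 := by
  simp [doubleRootPoly, eval_prod, div_eq_inv_mul]

theorem coeff_zero_doubleRootPoly (t : ι → ℝ) (c : Finset ι) :
    (doubleRootPoly t c).coeff 0 = 1 := by
  simp [coeff_zero_eq_eval_zero, eval_doubleRootPoly]

theorem natDegree_doubleRootPoly_le (t : ι → ℝ) (c : Finset ι) :
    (doubleRootPoly t c).natDegree ≤ 2 * c.card := by
  refine (natDegree_prod_le _ _).trans ?_
  rw [mul_comm, ← smul_eq_mul, ← Finset.sum_const]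
  exact Finset.sum_le_sum fun _ _ => by compute_degree

end MomentCurve

open Polynomial in
theorem hasClosedRealization_two_mul_add_one {n d : ℕ} {C : Set (Finset (Fin n))}
    (hempty : ∅ ∈ C) (hIC : ∀ c₁ ∈ C, ∀ c₂ ∈ C, c₁ ∩ c₂ ∈ C)
    (hub : ∀ c ∈ C, c.card ≤ d + 1) :
    HasClosedRealization n C (2 * d + 1) := by
  set t : Fin n → ℝ := fun i => (i : ℕ) + 1
  have ht : ∀ i, 0 < t i := fun i => by positivity
  set q := doubleRootPoly t
  have hmoment : ∀ c ∈ C, ∀ s,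
      momentFunctional (2 * d + 2) s (fun k => -(q c).coeff (k + 1)) = 1 - (q c).eval s :=
    fun c hc => momentFunctional_neg_coeff
      ((natDegree_doubleRootPoly_le t c).trans (by linarith [hub c hc]))
      (coeff_zero_doubleRootPoly t c)
  refine hasClosedRealization_of_functionals (E := Fin (2 * d + 2) → ℝ) (by omega) (by simp)
    hempty hIC (fun c k => -(q c).coeff (k + 1)) (fun i => momentFunctional _ (t i))
    (-momentFunctional _ (-1)) ?_ ?_ ?_ ?_
  · intro h
    have := LinearMap.congr_fun h (Pi.single 0 1)
    simp [momentFunctional, Fintype.linearCombination_apply, Pi.single_apply] at this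
  · intro c hc _ i
    rw [hmoment c hc, sub_le_self_iff, eval_doubleRootPoly]
    positivity
  · intro c hc _
    ext i
    rw [mem_activeSet, hmoment c hc, sub_eq_self, eval_doubleRootPoly, Finset.prod_eq_zero_iff]
    constructor
    · rintro ⟨j, hj, hij⟩
      rw [sq_eq_zero_iff, sub_eq_zero, eq_comm, div_eq_one_iff_eq (ht j).ne'] at hij
      simp only [t, add_left_inj, Nat.cast_inj, Fin.val_inj] at hij
      rwa [hij]
    · intro hi
      exact ⟨i, hi, by simp [(ht i).ne']⟩
  · intro c hc hc₀
    rw [LinearMap.neg_apply, hmoment c hc, neg_sub, sub_pos, eval_doubleRootPoly]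
    calc (1 : ℝ) = ∏ _j ∈ c, 1 := Finset.prod_const_one.symm
      _ < ∏ j ∈ c, (1 - -1 / t j) ^ 2 :=
        Finset.prod_lt_prod_of_nonempty (fun _ _ => one_pos)
          (fun j _ => by rw [neg_div, sub_neg_eq_add]; nlinarith [div_pos one_pos (ht j)])
          (Finset.nonempty_iff_ne_empty.2 hc₀)

theorem closedRealization_min_bound_general {n d : ℕ} (hn : 2 ≤ n)
    (C : Set (Finset (Fin n))) (hempty : ∅ ∈ C)
    (hIC : ∀ c₁ ∈ C, ∀ c₂ ∈ C, c₁ ∩ c₂ ∈ C)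
    (hub : ∀ c ∈ C, c.card ≤ d + 1) :
    HasClosedRealization n C (min (2*d+1) (n-1)) := by
  rcases le_total (2 * d + 1) (n - 1) with h | h
  · rw [min_eq_left h]
    exact hasClosedRealization_two_mul_add_one hempty hIC hub
  · rw [min_eq_right h]
    exact hasClosedRealization_sub_one hn hempty hIC

/-- An intersection complete code on `n ≥ 2` neurons whose largest codeword has
cardinality `d + 1` has a closed convex realization in `ℝ^(min (2d+1) (n-1))`. -/
theorem closedRealization_min_bound {n d : ℕ} (hn : 2 ≤ n)
    (C : Set (Finset (Fin n))) (hempty : ∅ ∈ C)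
    (hIC : ∀ c₁ ∈ C, ∀ c₂ ∈ C, c₁ ∩ c₂ ∈ C)
    (hub : ∀ c ∈ C, c.card ≤ d + 1) (hex : ∃ c ∈ C, c.card = d + 1) :
    HasClosedRealization n C (min (2*d+1) (n-1)) :=
  closedRealization_min_bound_general hn C hempty hIC hub
end

section
/- For all d ≥ 2 and k ≥ 1, there exist a k-flexible sunflower U = (U_1,…,U_{dk}) of convex open sets in ℝ^d and points p_1,…,p_{dk} with p_i ∈ U_i, such that the convex hull of {p_1,…,p_{dk}} contains no point of the center ⋂_{i=1}^{dk} U_i. -/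
/-!
Let the chimney `C_j` be the open cube `(-1, 1)^d` extended to infinity in the direction `e_j`,
and take each of the `d` chimneys `k` times as petals. For `d ≥ 2` two distinct chimneys meet
exactly in the cube, so the cube is the center and a point outside it lies in at most one
chimney, i.e. in at most `k` petals. The points `d • e_j ∈ C_j` lie on the hyperplane
`∑ x_i = d`, hence so does their convex hull, while every point of the cube has coordinate sum
`< d`.
-/

/-- `U` is a `k`-flexible sunflower of convex open sets: the sets have a common point and
every point of the space lies either in all of the `U i` or in at most `k` of them. -/
def IsKFlexibleSunflower {n d : ℕ} (k : ℕ) (U : Fin n → Set (EuclideanSpace ℝ (Fin d))) : Prop :=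
  (∀ i, Convex ℝ (U i)) ∧ (∀ i, IsOpen (U i)) ∧ (⋂ i, U i).Nonempty ∧
  ∀ x : EuclideanSpace ℝ (Fin d), {i | x ∈ U i} = Set.univ ∨ {i | x ∈ U i}.ncard ≤ k

open Set

section Chimney

variable {d : ℕ}

def chimney (j : Fin d) : Set (EuclideanSpace ℝ (Fin d)) :=
  ⋂ i, EuclideanSpace.proj i ⁻¹' (if i = j then Ioi (-1) else Ioo (-1) 1)

lemma mem_chimney {j : Fin d} {x : EuclideanSpace ℝ (Fin d)} :
    x ∈ chimney j ↔ ∀ i, -1 < x i ∧ (i ≠ j → x i < 1) := by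
  refine mem_iInter.trans (forall_congr' fun i => ?_)
  by_cases h : i = j <;> simp [h]

lemma convex_chimney (j : Fin d) : Convex ℝ (chimney j) :=
  convex_iInter fun i => by
    split_ifs
    exacts [(convex_Ioi _).linear_preimage _, (convex_Ioo _ _).linear_preimage _]

lemma isOpen_chimney (j : Fin d) : IsOpen (chimney j) :=
  isOpen_iInter_of_finite fun i => by
    split_ifs
    exacts [isOpen_Ioi.preimage (EuclideanSpace.proj i).continuous,
      isOpen_Ioo.preimage (EuclideanSpace.proj i).continuous]

lemma zero_mem_chimney (j : Fin d) : 0 ∈ chimney j :=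
  mem_chimney.2 fun _ => by norm_num

lemma single_mem_chimney (j : Fin d) {c : ℝ} (hc : -1 < c) :
    EuclideanSpace.single j c ∈ chimney j :=
  mem_chimney.2 fun i => by
    by_cases h : i = j <;> simp [h, hc]

lemma mem_chimney_of_ne {x : EuclideanSpace ℝ (Fin d)} {j j' : Fin d} (h : j ≠ j')
    (hj : x ∈ chimney j) (hj' : x ∈ chimney j') (l : Fin d) : x ∈ chimney l := by
  rw [mem_chimney] at *
  refine fun i => ⟨(hj i).1, fun _ => ?_⟩
  by_cases hi : i = j
  · exact (hj' i).2 (hi ▸ h)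
  · exact (hj i).2 hi

lemma sum_lt_of_forall_mem_chimney [Nontrivial (Fin d)] {x : EuclideanSpace ℝ (Fin d)}
    (hx : ∀ j, x ∈ chimney j) : ∑ i, x i < d := by
  have hlt : ∀ i, x i < 1 := fun i => by
    obtain ⟨j, hj⟩ := exists_ne i
    exact (mem_chimney.1 (hx j) i).2 hj.symm
  calc ∑ i, x i < ∑ _i : Fin d, (1 : ℝ) :=
        Finset.sum_lt_sum_of_nonempty Finset.univ_nonempty fun i _ => hlt i
    _ = d := by simp

end Chimney

lemma convexHull_range_single_subset {ι : Type*} {d : ℕ} (f : ι → Fin d) (c : ℝ) :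
    convexHull ℝ (range fun i => EuclideanSpace.single (f i) c) ⊆
      {x : EuclideanSpace ℝ (Fin d) | ∑ l, x l = c} := by
  have hconv : Convex ℝ {x : EuclideanSpace ℝ (Fin d) | ∑ l, x l = c} := by
    have : {x : EuclideanSpace ℝ (Fin d) | ∑ l, x l = c} =
        (∑ l, EuclideanSpace.proj l : EuclideanSpace ℝ (Fin d) →L[ℝ] ℝ) ⁻¹' {c} := by
      ext; simp
    exact this ▸ (convex_singleton c).linear_preimage _
  refine convexHull_min ?_ hconv
  rintro _ ⟨i, rfl⟩
  simp

section RepeatPetals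

variable {m k d : ℕ}

def repeatPetals (V : Fin m → Set (EuclideanSpace ℝ (Fin d))) (k : ℕ) :
    Fin (m * k) → Set (EuclideanSpace ℝ (Fin d)) :=
  fun i => V (finProdFinEquiv.symm i).1

lemma ncard_setOf_fst_finProdFinEquiv_symm_eq_le (j : Fin m) :
    {i : Fin (m * k) | (finProdFinEquiv.symm i).1 = j}.ncard ≤ k := by
  have hinj : InjOn (fun i => (finProdFinEquiv.symm i).2)
      {i : Fin (m * k) | (finProdFinEquiv.symm i).1 = j} := fun a ha b hb hab =>
    finProdFinEquiv.symm.injective (Prod.ext (ha.trans hb.symm) hab)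
  calc _ ≤ (univ : Set (Fin k)).ncard := ncard_le_ncard_of_injOn _ (fun _ _ => mem_univ _) hinj
    _ = k := by simp

lemma iInter_subset_iInter_repeatPetals (V : Fin m → Set (EuclideanSpace ℝ (Fin d))) :
    ⋂ j, V j ⊆ ⋂ i, repeatPetals V k i :=
  subset_iInter fun _ => iInter_subset _ _

lemma iInter_repeatPetals [Nonempty (Fin k)] (V : Fin m → Set (EuclideanSpace ℝ (Fin d))) :
    ⋂ i, repeatPetals V k i = ⋂ j, V j := by
  refine subset_antisymm (subset_iInter fun j => ?_) (iInter_subset_iInter_repeatPetals V)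
  obtain ⟨r⟩ := ‹Nonempty (Fin k)›
  simpa [repeatPetals] using iInter_subset (repeatPetals V k) (finProdFinEquiv (j, r))

lemma isKFlexibleSunflower_repeatPetals {V : Fin m → Set (EuclideanSpace ℝ (Fin d))}
    (hconv : ∀ j, Convex ℝ (V j)) (hopen : ∀ j, IsOpen (V j))
    (hcenter : (⋂ j, V j).Nonempty)
    (hpair : ∀ {x j j'}, j ≠ j' → x ∈ V j → x ∈ V j' → ∀ l, x ∈ V l) :
    IsKFlexibleSunflower k (repeatPetals V k) := by
  refine ⟨fun _ => hconv _, fun _ => hopen _, hcenter.mono (iInter_subset_iInter_repeatPetals V),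
    fun x => ?_⟩
  by_cases hall : ∀ l, x ∈ V l
  · exact Or.inl (eq_univ_of_forall fun _ => hall _)
  right
  by_cases hsome : ∃ j, x ∈ V j
  · obtain ⟨j, hj⟩ := hsome
    refine (ncard_le_ncard fun i (hi : x ∈ V _) => ?_).trans
      (ncard_setOf_fst_finProdFinEquiv_symm_eq_le (k := k) j)
    by_contra hne
    exact hall (hpair hne hi hj)
  · simp [repeatPetals, not_exists.1 hsome]

end RepeatPetals

theorem flexible_sunflower_fails_general {d k : ℕ} (hd : 2 ≤ d) :
    ∃ U : Fin (d*k) → Set (EuclideanSpace ℝ (Fin d)),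
      IsKFlexibleSunflower k U ∧
      ∃ p : Fin (d*k) → EuclideanSpace ℝ (Fin d),
        (∀ i, p i ∈ U i) ∧ convexHull ℝ (Set.range p) ∩ (⋂ i, U i) = ∅ := by
  have : Nontrivial (Fin d) := Fin.nontrivial_iff_two_le.mpr hd
  refine ⟨repeatPetals chimney k,
    isKFlexibleSunflower_repeatPetals convex_chimney isOpen_chimney
      ⟨0, mem_iInter.2 zero_mem_chimney⟩ mem_chimney_of_ne,
    fun i => EuclideanSpace.single (finProdFinEquiv.symm i).1 (d : ℝ),
    fun i => single_mem_chimney _ (neg_one_lt_zero.trans_le d.cast_nonneg), ?_⟩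
  refine eq_empty_of_forall_notMem fun x ⟨hhull, hcenter⟩ => ?_
  obtain ⟨_, i₀, rfl⟩ := convexHull_nonempty_iff.mp ⟨x, hhull⟩
  have : Nonempty (Fin k) := ⟨(finProdFinEquiv.symm i₀).2⟩
  rw [iInter_repeatPetals] at hcenter
  have hsum_lt := sum_lt_of_forall_mem_chimney (mem_iInter.1 hcenter)
  have hsum_eq : ∑ l, x l = d := convexHull_range_single_subset _ _ hhull
  exact hsum_lt.ne hsum_eq

/-- For `d ≥ 2`, `k ≥ 1`, there is a `k`-flexible sunflower in `ℝ^d` with `dk` petals and a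
choice of one point per petal whose convex hull misses the center. -/
theorem flexible_sunflower_fails {d k : ℕ} (hd : 2 ≤ d) (hk : 1 ≤ k) :
    ∃ U : Fin (d*k) → Set (EuclideanSpace ℝ (Fin d)),
      IsKFlexibleSunflower k U ∧
      ∃ p : Fin (d*k) → EuclideanSpace ℝ (Fin d),
        (∀ i, p i ∈ U i) ∧ convexHull ℝ (Set.range p) ∩ (⋂ i, U i) = ∅ :=
  flexible_sunflower_fails_general hd
end

section
/- For any n ≥ 2 and any m with 1 ≤ m ≤ binom(n−1, ⌊(n−1)/2⌋), there exists an intersection complete code C ⊆ 2^{[n]} with exactly m+1 maximal codewords such that C has an open convex realization in ℝ^m but no open convex realization in ℝ^{m−1}. -/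
/-!
Fix `z ∈ [n]` and distinct `⌊(n-1)/2⌋`-subsets `T₁, …, Tₘ` of `E = [n] ∖ {z}`. The code consists
of `∅` and all intersections of the words `E, T₁ ∪ {z}, …, Tₘ ∪ {z}`, which are its `m + 1` maximal
codewords. To realize it in `ℝᵐ`, attach to these words the open half-spaces `∑ xᵢ > m` and
`xᵢ < 1`, and let neuron `j` be the intersection of the half-spaces attached to the words missing
`j`: the codeword of a point is then the intersection of the words whose half-spaces miss it.

In a convex open realization, the sets `U_{Tᵢ}` form a sunflower of `m` petals around the centre
`U_E`, and `U_z` meets every petal but not the centre. This is impossible in `ℝᵈ` for `d < m`.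
Take polars at a point of the centre: because two petals meet only inside the centre, the polar
`L` of the centre is the convex join of any two petal polars, so each extreme point of `L` lies
in all petal polars but at most one. A conic Carathéodory argument then covers the convex hull
of the extreme points by the petal polars, and by Krein–Milman so is all of `L`. But a
functional separating the centre from `U_z` lies in `L` and in no petal polar.
-/

open Set Topology Module
open scoped RealInnerProductSpace

section SubconvexCombination

variable {𝕜 V : Type*} [Field 𝕜] [LinearOrder 𝕜] [IsStrictOrderedRing 𝕜]
  [AddCommGroup V] [Module 𝕜 V]

lemma Convex.sum_smul_mem_of_zero_mem {B : Set V} (hB : Convex 𝕜 B) (h0 : (0 : V) ∈ B)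
    {ι : Type*} {t : Finset ι} {w : ι → 𝕜} {v : ι → V} (hw : ∀ i ∈ t, 0 ≤ w i)
    (hw1 : ∑ i ∈ t, w i ≤ 1) (hv : ∀ i ∈ t, v i ∈ B) : ∑ i ∈ t, w i • v i ∈ B := by
  rcases (Finset.sum_nonneg hw).eq_or_lt with hzero | hpos
  · rw [Finset.sum_eq_zero fun i hi => by
      rw [(Finset.sum_eq_zero_iff_of_nonneg hw).1 hzero.symm i hi, zero_smul]]
    exact h0
  · have := (hB.starConvex h0).smul_mem (hB.centerMass_mem hw hpos hv) hpos.le hw1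
    rwa [Finset.centerMass, smul_inv_smul₀ hpos.ne'] at this

lemma mem_convexHull_insert_zero_iff {t : Finset V} {x : V} :
    x ∈ convexHull 𝕜 (insert 0 (t : Set V)) ↔
      ∃ w : V → 𝕜, (∀ e ∈ t, 0 ≤ w e) ∧ ∑ e ∈ t, w e ≤ 1 ∧ ∑ e ∈ t, w e • e = x := by
  classical
  constructor
  · intro hx
    rw [← Finset.coe_insert, Finset.mem_convexHull'] at hx
    obtain ⟨w, hw, hw1, rfl⟩ := hx
    refine ⟨w, fun e he => hw e (Finset.mem_insert_of_mem he), ?_, ?_⟩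
    · rw [← hw1]
      exact Finset.sum_le_sum_of_subset_of_nonneg (Finset.subset_insert 0 t)
        fun e he _ => hw e he
    · exact (Finset.sum_insert_zero (f := fun e => w e • e) (smul_zero _)).symm
  · rintro ⟨w, hw, hw1, rfl⟩
    exact (convex_convexHull 𝕜 _).sum_smul_mem_of_zero_mem
      (subset_convexHull 𝕜 _ (mem_insert 0 _)) hw hw1
      fun e he => subset_convexHull 𝕜 _ (mem_insert_of_mem 0 he)

variable [Module.Finite 𝕜 V]

lemma exists_relation_sum_nonneg_pos_coefficient {t : Finset V} (h : finrank 𝕜 V < t.card) :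
    ∃ f : V → 𝕜, ∑ e ∈ t, f e • e = 0 ∧ 0 ≤ ∑ e ∈ t, f e ∧ ∃ e ∈ t, 0 < f e := by
  obtain ⟨f, hf, x, hx, hfx⟩ := Module.exists_nontrivial_relation_of_finrank_lt_card h
  have hpos : ∀ g : V → 𝕜, 0 ≤ ∑ e ∈ t, g e → g x ≠ 0 → ∃ e ∈ t, 0 < g e := by
    intro g hg hgx
    by_contra! hneg
    exact hgx ((Finset.sum_eq_zero_iff_of_nonpos hneg).1
      (le_antisymm (Finset.sum_nonpos hneg) hg) x hx)
  rcases le_total 0 (∑ e ∈ t, f e) with hsum | hsum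
  · exact ⟨f, hf, hsum, hpos f hsum hfx⟩
  · have hsum' : 0 ≤ ∑ e ∈ t, (-f) e := by simpa [Finset.sum_neg_distrib] using hsum
    exact ⟨-f, by simp [neg_smul, Finset.sum_neg_distrib, hf], hsum',
      hpos (-f) hsum' (neg_ne_zero.2 hfx)⟩

lemma exists_mem_convexHull_insert_zero_erase [DecidableEq V] {t : Finset V}
    (h : finrank 𝕜 V < t.card) {x : V} (hx : x ∈ convexHull 𝕜 (insert 0 (t : Set V))) :
    ∃ e₀ ∈ t, x ∈ convexHull 𝕜 (insert 0 (t.erase e₀ : Set V)) := by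
  obtain ⟨w, hw, hw1, rfl⟩ := mem_convexHull_insert_zero_iff.1 hx
  obtain ⟨f, hf, hf0, hpos⟩ := exists_relation_sum_nonneg_pos_coefficient h
  -- move along the relation `f` until the first weight `w e₀` vanishes
  obtain ⟨e₀, he₀, hmin⟩ := Finset.exists_min_image (t.filter (0 < f ·))
    (fun e => w e / f e) (by simpa [Finset.filter_nonempty_iff] using hpos)
  rw [Finset.mem_filter] at he₀
  set s := w e₀ / f e₀
  have hs : 0 ≤ s := div_nonneg (hw e₀ he₀.1) he₀.2.le
  set c : V → 𝕜 := fun e => w e - s * f e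
  have hc : ∀ e ∈ t, 0 ≤ c e := by
    intro e he
    rcases lt_or_ge 0 (f e) with hfe | hfe
    · have := hmin e (Finset.mem_filter.2 ⟨he, hfe⟩)
      rw [le_div_iff₀ hfe] at this
      simp only [c]
      linarith
    · have := hw e he
      simp only [c]
      nlinarith
  have hce₀ : c e₀ = 0 := by simp [c, s, div_mul_cancel₀ _ he₀.2.ne']
  refine ⟨e₀, he₀.1, mem_convexHull_insert_zero_iff.2
    ⟨c, fun e he => hc e (Finset.mem_of_mem_erase he), ?_, ?_⟩⟩
  · rw [Finset.sum_erase _ hce₀]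
    simp only [c, Finset.sum_sub_distrib, ← Finset.mul_sum]
    nlinarith
  · rw [Finset.sum_erase _ (by rw [hce₀, zero_smul])]
    simp only [c, sub_smul, Finset.sum_sub_distrib, mul_smul, ← Finset.smul_sum, hf, smul_zero,
      sub_zero]

theorem convexHull_subset_iUnion_of_forall_mem_union {ι : Type*} [Fintype ι] {B : ι → Set V}
    (hB : ∀ i, Convex 𝕜 (B i)) (h0 : ∀ i, (0 : V) ∈ B i) (hcard : finrank 𝕜 V < Fintype.card ι)
    {S : Set V} (hS : ∀ x ∈ S, ∀ i j, i ≠ j → x ∈ B i ∪ B j) :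
    convexHull 𝕜 S ⊆ ⋃ i, B i := by
  classical
  suffices key : ∀ t : Finset V, ↑t ⊆ S → convexHull 𝕜 (insert 0 (t : Set V)) ⊆ ⋃ i, B i by
    rw [convexHull_eq_union_convexHull_finite_subsets]
    simp only [iUnion_subset_iff]
    exact fun t ht => (convexHull_mono (subset_insert 0 _)).trans (key t ht)
  intro t
  induction t using Finset.strongInduction with
  | H t ih =>
    intro htS x hx
    by_cases hcov : ∃ i, ↑t ⊆ B i
    · obtain ⟨i, hi⟩ := hcov
      exact mem_iUnion.2 ⟨i, convexHull_min (insert_subset (h0 i) hi) (hB i) hx⟩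
    simp only [not_exists] at hcov
    choose e het heB using fun i => not_subset.1 (hcov i)
    -- as no `B i` contains `t`, it has at least `card ι` points, so one of them can be dropped
    have hinj : Function.Injective e := by
      intro i j hij
      by_contra hne
      rcases hS (e i) (htS (het i)) i j hne with h | h
      exacts [heB i h, heB j (hij ▸ h)]
    have hle : Fintype.card ι ≤ t.card :=
      Finset.card_le_card_of_injOn e (fun i _ => het i) hinj.injOn
    obtain ⟨e₀, he₀, hx'⟩ := exists_mem_convexHull_insert_zero_erase (hcard.trans_le hle) hx
    exact ih _ (Finset.erase_ssubset he₀)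
      ((Finset.coe_subset.2 (Finset.erase_subset _ _)).trans htS) hx'

end SubconvexCombination

lemma extremePoints_subset_union_of_subset_convexJoin {𝕜 V : Type*} [Field 𝕜] [LinearOrder 𝕜]
    [IsStrictOrderedRing 𝕜] [AddCommGroup V] [Module 𝕜 V] {L s t : Set V} (hs : s ⊆ L)
    (ht : t ⊆ L) (hL : L ⊆ convexJoin 𝕜 s t) : L.extremePoints 𝕜 ⊆ s ∪ t := by
  intro e he
  rw [mem_extremePoints_iff_forall_segment] at he
  obtain ⟨a, ha, b, hb, hab⟩ := mem_convexJoin.1 (hL he.1)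
  rcases he.2 a (hs ha) b (ht hb) hab with rfl | rfl
  exacts [Or.inl ha, Or.inr hb]

section ConvexTopology

variable {E : Type*} [AddCommGroup E] [Module ℝ E] [TopologicalSpace E]
  [IsTopologicalAddGroup E] [ContinuousSMul ℝ E]

lemma Convex.closure_inter_closure_subset [T2Space E] {A B : Set E} (hA : Convex ℝ A)
    (hAo : IsOpen A) (hB : Convex ℝ B) (hBo : IsOpen B) (hAB : (A ∩ B).Nonempty) :
    closure A ∩ closure B ⊆ closure (A ∩ B) := by
  obtain ⟨p, hpA, hpB⟩ := hAB
  intro w ⟨hwA, hwB⟩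
  have hseg : openSegment ℝ p w ⊆ A ∩ B := by
    refine subset_inter ?_ ?_
    · simpa [hAo.interior_eq] using
        hA.openSegment_interior_closure_subset_interior (by rwa [hAo.interior_eq]) hwA
    · simpa [hBo.interior_eq] using
        hB.openSegment_interior_closure_subset_interior (by rwa [hBo.interior_eq]) hwB
  refine closure_mono hseg ?_
  rw [closure_openSegment]
  exact right_mem_segment ℝ p w

lemma isCompact_convexJoin {s t : Set E} (hs : IsCompact s) (ht : IsCompact t) :
    IsCompact (convexJoin ℝ s t) := by
  have : convexJoin ℝ s t =
      (fun p : ℝ × E × E => (1 - p.1) • p.2.1 + p.1 • p.2.2) '' (Icc 0 1 ×ˢ s ×ˢ t) := by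
    ext z
    simp only [mem_convexJoin, segment_eq_image, mem_image, mem_prod, Prod.exists]
    constructor
    · rintro ⟨a, ha, b, hb, θ, hθ, rfl⟩
      exact ⟨θ, a, b, ⟨hθ, ha, hb⟩, rfl⟩
    · rintro ⟨θ, a, b, ⟨hθ, ha, hb⟩, rfl⟩
      exact ⟨a, ha, b, hb, θ, hθ, rfl⟩
  rw [this]
  exact (isCompact_Icc.prod (hs.prod ht)).image (by fun_prop)

end ConvexTopology

section InnerPolar

variable {E : Type*} [NormedAddCommGroup E] [InnerProductSpace ℝ E]

def innerPolar (A : Set E) : Set E := {y | ∀ x ∈ A, ⟪x, y⟫ ≤ 1}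

lemma innerPolar_anti {A B : Set E} (h : A ⊆ B) : innerPolar B ⊆ innerPolar A :=
  fun _ hy x hx => hy x (h hx)

lemma zero_mem_innerPolar (A : Set E) : (0 : E) ∈ innerPolar A := by
  simp [innerPolar]

lemma innerPolar_eq_biInter (A : Set E) :
    innerPolar A = ⋂ x ∈ A, innerSL ℝ x ⁻¹' Iic 1 := by
  ext y
  simp [innerPolar]

lemma convex_innerPolar (A : Set E) : Convex ℝ (innerPolar A) := by
  rw [innerPolar_eq_biInter]
  exact convex_iInter₂ fun x _ => (convex_Iic 1).linear_preimage (innerSL ℝ x).toLinearMap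

lemma isClosed_innerPolar (A : Set E) : IsClosed (innerPolar A) := by
  rw [innerPolar_eq_biInter]
  exact isClosed_biInter fun x _ => isClosed_Iic.preimage (innerSL ℝ x).continuous

lemma innerPolar_closure (A : Set E) : innerPolar (closure A) = innerPolar A := by
  refine (innerPolar_anti subset_closure).antisymm fun y hy => ?_
  have hclosed : IsClosed {x : E | ⟪x, y⟫ ≤ 1} :=
    isClosed_le (continuous_id.inner continuous_const) continuous_const
  exact closure_minimal hy hclosed

lemma exists_inner_eq_div [CompleteSpace E] (f : E →L[ℝ] ℝ) (u : ℝ) :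
    ∃ y : E, ∀ x, ⟪x, y⟫ = f x / u :=
  ⟨u⁻¹ • (InnerProductSpace.toDual ℝ E).symm f, fun x => by
    rw [real_inner_smul_right, real_inner_comm, InnerProductSpace.toDual_symm_apply,
      inv_mul_eq_div]⟩

theorem innerPolar_innerPolar [CompleteSpace E] {A : Set E} (hA : Convex ℝ A)
    (h0 : (0 : E) ∈ A) : innerPolar (innerPolar A) = closure A := by
  refine Subset.antisymm (fun w hw => ?_) ?_
  · by_contra hwA
    obtain ⟨f, u, hfA, hfw⟩ := geometric_hahn_banach_closed_point hA.closure isClosed_closure hwA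
    have hu : 0 < u := by simpa using hfA 0 (subset_closure h0)
    obtain ⟨y, hy⟩ := exists_inner_eq_div f u
    have hyA : y ∈ innerPolar A := fun x hx => by
      rw [hy, div_le_one hu]
      exact (hfA x (subset_closure hx)).le
    have := hw y hyA
    rw [real_inner_comm, hy, div_le_one hu] at this
    linarith
  · refine closure_minimal (fun x hx y hy => ?_) (isClosed_innerPolar _)
    rw [real_inner_comm]
    exact hy x hx

lemma isCompact_innerPolar [FiniteDimensional ℝ E] {A : Set E} (hA : A ∈ 𝓝 (0 : E)) :
    IsCompact (innerPolar A) := by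
  obtain ⟨r, hr, hball⟩ := Metric.nhds_basis_closedBall.mem_iff.1 hA
  refine (isCompact_closedBall (0 : E) r⁻¹).of_isClosed_subset (isClosed_innerPolar A)
    fun y hy => ?_
  rw [mem_closedBall_zero_iff]
  rcases eq_or_ne y 0 with rfl | hy0
  · simp [hr.le]
  have hny : 0 < ‖y‖ := norm_pos_iff.2 hy0
  have hx : (r / ‖y‖) • y ∈ Metric.closedBall (0 : E) r := by
    rw [mem_closedBall_zero_iff, norm_smul, Real.norm_of_nonneg (by positivity),
      div_mul_cancel₀ _ hny.ne']
  have h1 := hy _ (hball hx)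
  rw [real_inner_smul_left, real_inner_self_eq_norm_sq] at h1
  rw [le_inv_comm₀ hny hr, ← one_div, le_div_iff₀ hny]
  calc r * ‖y‖ = r / ‖y‖ * ‖y‖ ^ 2 := by field_simp
    _ ≤ 1 := h1

end InnerPolar

section Sunflower

variable {E : Type*} [NormedAddCommGroup E] [InnerProductSpace ℝ E] [FiniteDimensional ℝ E]

lemma innerPolar_subset_convexJoin {K A B : Set E} (hA : Convex ℝ A) (hAo : IsOpen A)
    (hB : Convex ℝ B) (hBo : IsOpen B) (hA0 : (0 : E) ∈ A) (hB0 : (0 : E) ∈ B)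
    (hAB : A ∩ B ⊆ K) :
    innerPolar K ⊆ convexJoin ℝ (innerPolar A) (innerPolar B) := by
  set J := convexJoin ℝ (innerPolar A) (innerPolar B)
  have hJ : IsCompact J := isCompact_convexJoin (isCompact_innerPolar (hAo.mem_nhds hA0))
    (isCompact_innerPolar (hBo.mem_nhds hB0))
  have hJ0 : (0 : E) ∈ J :=
    subset_convexJoin_left ⟨0, zero_mem_innerPolar B⟩ (zero_mem_innerPolar A)
  have hpolJ : innerPolar J ⊆ closure K := calc
    innerPolar J ⊆ innerPolar (innerPolar A) ∩ innerPolar (innerPolar B) :=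
      subset_inter (innerPolar_anti (subset_convexJoin_left ⟨0, zero_mem_innerPolar B⟩))
        (innerPolar_anti (subset_convexJoin_right ⟨0, zero_mem_innerPolar A⟩))
    _ = closure A ∩ closure B := by
      rw [innerPolar_innerPolar hA hA0, innerPolar_innerPolar hB hB0]
    _ ⊆ closure (A ∩ B) := hA.closure_inter_closure_subset hAo hB hBo ⟨0, hA0, hB0⟩
    _ ⊆ closure K := closure_mono hAB
  calc innerPolar K = innerPolar (closure K) := (innerPolar_closure K).symm
    _ ⊆ innerPolar (innerPolar J) := innerPolar_anti hpolJ
    _ = J := by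
      rw [innerPolar_innerPolar ((convex_innerPolar A).convexJoin (convex_innerPolar B)) hJ0,
        hJ.isClosed.closure_eq]

theorem innerPolar_subset_iUnion_innerPolar {ι : Type*} [Fintype ι]
    (hcard : finrank ℝ E < Fintype.card ι) {K : Set E} {A : ι → Set E} (hK : K ∈ 𝓝 (0 : E))
    (hA : ∀ i, Convex ℝ (A i)) (hAo : ∀ i, IsOpen (A i)) (hKA : ∀ i, K ⊆ A i)
    (hAA : ∀ i j, i ≠ j → A i ∩ A j ⊆ K) :
    innerPolar K ⊆ ⋃ i, innerPolar (A i) := by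
  set L := innerPolar K
  have hA0 : ∀ i, (0 : E) ∈ A i := fun i => hKA i (mem_of_mem_nhds hK)
  have hext : ∀ x ∈ L.extremePoints ℝ, ∀ i j, i ≠ j →
      x ∈ innerPolar (A i) ∪ innerPolar (A j) := fun x hx i j hij =>
    extremePoints_subset_union_of_subset_convexJoin (innerPolar_anti (hKA i))
      (innerPolar_anti (hKA j))
      (innerPolar_subset_convexJoin (hA i) (hAo i) (hA j) (hAo j) (hA0 i) (hA0 j) (hAA i j hij))
      hx
  calc L = closure (convexHull ℝ (L.extremePoints ℝ)) :=
        (closure_convexHull_extremePoints (isCompact_innerPolar hK) (convex_innerPolar K)).symm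
    _ ⊆ ⋃ i, innerPolar (A i) :=
        closure_minimal (convexHull_subset_iUnion_of_forall_mem_union
          (fun i => convex_innerPolar _) (fun i => zero_mem_innerPolar _) hcard hext)
          (isClosed_iUnion_of_finite fun i => isClosed_innerPolar _)

lemma sunflower_inter_nonempty_of_zero_mem {ι : Type*} [Fintype ι]
    (hcard : finrank ℝ E < Fintype.card ι) {K W : Set E} {A : ι → Set E}
    (hK : Convex ℝ K) (hKo : IsOpen K) (hK0 : (0 : E) ∈ K) (hW : Convex ℝ W) (hWo : IsOpen W)
    (hA : ∀ i, Convex ℝ (A i)) (hAo : ∀ i, IsOpen (A i)) (hKA : ∀ i, K ⊆ A i)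
    (hAA : ∀ i j, i ≠ j → A i ∩ A j ⊆ K) (hAW : ∀ i, (A i ∩ W).Nonempty) :
    (K ∩ W).Nonempty := by
  by_contra hKW
  obtain ⟨f, u, hfK, hfW⟩ := geometric_hahn_banach_open_open hK hKo hW hWo
    (disjoint_iff_inter_eq_empty.2 (not_nonempty_iff_eq_empty.1 hKW))
  have hu : 0 < u := by simpa using hfK 0 hK0
  obtain ⟨y, hy⟩ := exists_inner_eq_div f u
  have hyK : y ∈ innerPolar K := fun x hx => by
    rw [hy, div_le_one hu]
    exact (hfK x hx).le
  obtain ⟨i, hi⟩ := mem_iUnion.1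
    (innerPolar_subset_iUnion_innerPolar hcard (hKo.mem_nhds hK0) hA hAo hKA hAA hyK)
  obtain ⟨q, hqA, hqW⟩ := hAW i
  have hq := hi q hqA
  rw [hy, div_le_one hu] at hq
  exact (hfW q hqW).not_ge hq

theorem sunflower_inter_nonempty {ι : Type*} [Fintype ι]
    (hcard : finrank ℝ E < Fintype.card ι) {K W : Set E} {A : ι → Set E}
    (hK : Convex ℝ K) (hKo : IsOpen K) (hKne : K.Nonempty) (hW : Convex ℝ W) (hWo : IsOpen W)
    (hA : ∀ i, Convex ℝ (A i)) (hAo : ∀ i, IsOpen (A i)) (hKA : ∀ i, K ⊆ A i)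
    (hAA : ∀ i j, i ≠ j → A i ∩ A j ⊆ K) (hAW : ∀ i, (A i ∩ W).Nonempty) :
    (K ∩ W).Nonempty := by
  obtain ⟨c, hc⟩ := hKne
  have hτ : Continuous (c + · : E → E) := continuous_const.add continuous_id
  obtain ⟨x, hxK, hxW⟩ := sunflower_inter_nonempty_of_zero_mem (K := (c + ·) ⁻¹' K)
    (W := (c + ·) ⁻¹' W) (A := fun i => (c + ·) ⁻¹' A i) hcard
    (hK.translate_preimage_right c) (hKo.preimage hτ) (by simpa using hc)
    (hW.translate_preimage_right c) (hWo.preimage hτ)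
    (fun i => (hA i).translate_preimage_right c) (fun i => (hAo i).preimage hτ)
    (fun i => preimage_mono (hKA i))
    (fun i j hij => by rw [← preimage_inter]; exact preimage_mono (hAA i j hij))
    (fun i => by
      obtain ⟨q, hq⟩ := hAW i
      exact ⟨q - c, by simpa using hq⟩)
  exact ⟨c + x, hxK, hxW⟩

end Sunflower

theorem not_hasOpenRealization_of_sunflower {n d : ℕ} {C : Set (Finset (Fin n))} {ι : Type*}
    [Fintype ι] (hd : d < Fintype.card ι) {σ τ : Finset (Fin n)} {ρ : ι → Finset (Fin n)}
    (hσ : σ ∈ C) (hστ : ∀ c ∈ C, ¬ σ ∪ τ ⊆ c) (hρσ : ∀ i, ρ i ⊆ σ)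
    (hρρ : ∀ c ∈ C, ∀ i j, i ≠ j → ρ i ∪ ρ j ⊆ c → σ ⊆ c)
    (hρτ : ∀ i, ∃ c ∈ C, ρ i ∪ τ ⊆ c) : ¬ HasOpenRealization n C d := by
  classical
  rintro ⟨U, hUc, hUo, rfl⟩
  let V : Finset (Fin n) → Set (EuclideanSpace ℝ (Fin d)) := fun s => ⋂ j ∈ s, U j
  let cw : EuclideanSpace ℝ (Fin d) → Finset (Fin n) := fun x => Finset.univ.filter (x ∈ U ·)
  have hcw : ∀ x, cw x ∈ codeOf U := fun x => ⟨x, fun j => by simp [cw]⟩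
  have hV : ∀ s x, x ∈ V s ↔ s ⊆ cw x := fun s x => by
    simp [V, cw, Finset.subset_iff]
  have hVne : ∀ c ∈ codeOf U, ∀ s ⊆ c, (V s).Nonempty := by
    rintro c ⟨x, hx⟩ s hs
    exact ⟨x, mem_iInter₂.2 fun j hj => (hx j).1 (hs hj)⟩
  have hVc : ∀ s, Convex ℝ (V s) := fun s => convex_iInter₂ fun j _ => hUc j
  have hVo : ∀ s, IsOpen (V s) := fun s => isOpen_biInter_finset fun j _ => hUo j
  obtain ⟨x, hxσ, hxτ⟩ := sunflower_inter_nonempty (A := fun i => V (ρ i))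
    (by simpa using hd) (hVc σ) (hVo σ) (hVne σ hσ σ subset_rfl) (hVc τ) (hVo τ)
    (fun i => hVc (ρ i)) (fun i => hVo (ρ i))
    (fun i => biInter_subset_biInter_left (hρσ i))
    (fun i j hij x ⟨hi, hj⟩ => (hV σ x).2 <|
      hρρ _ (hcw x) i j hij (Finset.union_subset ((hV _ x).1 hi) ((hV _ x).1 hj)))
    (fun i => by
      obtain ⟨c, hc, hρτc⟩ := hρτ i
      obtain ⟨x, hx⟩ := hVne c hc _ hρτc
      have h := (hV _ x).1 hx
      exact ⟨x, (hV _ x).2 (Finset.union_subset_left h),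
        (hV _ x).2 (Finset.union_subset_right h)⟩)
  exact hστ _ (hcw x) (Finset.union_subset ((hV σ x).1 hxσ) ((hV τ x).1 hxτ))

section InterClosure

variable {α κ : Type*} [Fintype α] [DecidableEq α] {M : κ → Finset α}

def interClosure (M : κ → Finset α) : Set (Finset α) :=
  insert ∅ {c | ∃ S : Finset κ, S.Nonempty ∧ S.inf M = c}

lemma empty_mem_interClosure (M : κ → Finset α) : ∅ ∈ interClosure M :=
  mem_insert _ _

lemma apply_mem_interClosure (M : κ → Finset α) (a : κ) : M a ∈ interClosure M :=
  Or.inr ⟨{a}, Finset.singleton_nonempty a, Finset.inf_singleton⟩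

lemma inter_mem_interClosure [DecidableEq κ] {c₁ c₂ : Finset α} (h₁ : c₁ ∈ interClosure M)
    (h₂ : c₂ ∈ interClosure M) : c₁ ∩ c₂ ∈ interClosure M := by
  rcases h₁ with rfl | ⟨S, hS, rfl⟩
  · simpa using empty_mem_interClosure M
  rcases h₂ with rfl | ⟨S', -, rfl⟩
  · simpa using empty_mem_interClosure M
  exact Or.inr ⟨S ∪ S', hS.mono Finset.subset_union_left, Finset.inf_union⟩

lemma exists_subset_of_mem_interClosure {c : Finset α} (hc : c ∈ interClosure M)
    (hne : c.Nonempty) : ∃ a, c ⊆ M a := by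
  rcases hc with rfl | ⟨S, ⟨a, ha⟩, rfl⟩
  · exact absurd hne Finset.not_nonempty_empty
  · exact ⟨a, Finset.inf_le ha⟩

theorem maximals_interClosure [Nonempty κ] (hM : ∀ a b, M a ⊆ M b → a = b)
    (hne : ∀ a, (M a).Nonempty) :
    {c | c ∈ interClosure M ∧ ∀ c' ∈ interClosure M, c ⊆ c' → c = c'} = range M := by
  ext c
  constructor
  · rintro ⟨rfl | ⟨S, ⟨a, ha⟩, rfl⟩, hmax⟩
    · obtain ⟨a⟩ := ‹Nonempty κ›
      exact absurd (hmax _ (apply_mem_interClosure M a) (Finset.empty_subset _)).symm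
        (hne a).ne_empty
    · exact ⟨a, (hmax _ (apply_mem_interClosure M a) (Finset.inf_le ha)).symm⟩
  · rintro ⟨a, rfl⟩
    refine ⟨apply_mem_interClosure M a, fun c' hc' hac' => ?_⟩
    obtain ⟨b, hb⟩ := exists_subset_of_mem_interClosure hc' ((hne a).mono hac')
    exact hac'.antisymm (hM a b (hac'.trans hb) ▸ hb)

lemma ncard_maximals_interClosure [Nonempty κ] (hM : ∀ a b, M a ⊆ M b → a = b)
    (hne : ∀ a, (M a).Nonempty) :
    {c | c ∈ interClosure M ∧ ∀ c' ∈ interClosure M, c ⊆ c' → c = c'}.ncard = Nat.card κ := by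
  rw [maximals_interClosure hM hne,
    ncard_range_of_injective fun a b hab => hM a b hab.subset]

end InterClosure

lemma codeOf_eq_interClosure {n : ℕ} {X κ : Type*} [Fintype κ] {M : κ → Finset (Fin n)}
    {H : Set X} {R : κ → Set X} (hR : ∀ x, ∃ a, x ∉ R a)
    (hS : ∀ S : Finset κ, S.Nonempty → ∃ x ∈ H, ∀ a, x ∈ R a ↔ a ∉ S) (hH : ∃ x, x ∉ H) :
    codeOf (fun j => H ∩ ⋂ (a) (_ : j ∉ M a), R a) = interClosure M := by
  classical
  have key : ∀ x ∈ H, ∀ j, j ∈ (Finset.univ.filter (x ∉ R ·)).inf M ↔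
      x ∈ H ∩ ⋂ (a) (_ : j ∉ M a), R a := by
    intro x hx j
    simp only [Finset.mem_inf, Finset.mem_filter, Finset.mem_univ, true_and, mem_inter_iff,
      mem_iInter, hx]
    exact forall_congr' fun a => not_imp_comm
  ext σ
  constructor
  · rintro ⟨x, hx⟩
    by_cases hxH : x ∈ H
    · obtain ⟨a, ha⟩ := hR x
      exact Or.inr ⟨_, ⟨a, by simpa using ha⟩,
        Finset.ext fun j => (key x hxH j).trans (hx j).symm⟩
    · exact Or.inl (Finset.eq_empty_of_forall_notMem fun j hj => hxH ((hx j).1 hj).1)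
  · rintro (rfl | ⟨S, hSne, rfl⟩)
    · obtain ⟨x, hx⟩ := hH
      exact ⟨x, fun j => by simp [hx]⟩
    · obtain ⟨x, hxH, hxR⟩ := hS S hSne
      have : Finset.univ.filter (x ∉ R ·) = S := by
        ext a
        simp [hxR]
      exact ⟨x, this ▸ key x hxH⟩

section HalfSpaceFamily

variable {m : ℕ}

def halfSpaceFamily (m : ℕ) : Option (Fin m) → Set (EuclideanSpace ℝ (Fin m))
  | none => {x | (m : ℝ) < ∑ i, x i}
  | some i => {x | x i < 1}

lemma isLinearMap_sum_coord :
    IsLinearMap ℝ fun x : EuclideanSpace ℝ (Fin m) => ∑ i, x i :=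
  ⟨fun x y => by simp [Finset.sum_add_distrib], fun c x => by simp [Finset.mul_sum]⟩

lemma convex_halfSpaceFamily (a : Option (Fin m)) : Convex ℝ (halfSpaceFamily m a) := by
  cases a with
  | none => exact convex_halfSpace_gt isLinearMap_sum_coord _
  | some i => exact convex_halfSpace_lt ⟨fun x y => rfl, fun c x => rfl⟩ _

lemma isOpen_halfSpaceFamily (a : Option (Fin m)) : IsOpen (halfSpaceFamily m a) := by
  cases a with
  | none => exact isOpen_lt continuous_const (by fun_prop)
  | some i => exact isOpen_lt (by fun_prop) continuous_const

lemma exists_notMem_halfSpaceFamily (x : EuclideanSpace ℝ (Fin m)) :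
    ∃ a, x ∉ halfSpaceFamily m a := by
  by_contra! h
  have hsum : ∑ i, x i ≤ ∑ _i : Fin m, (1 : ℝ) :=
    Finset.sum_le_sum fun i _ => (h (some i)).le
  simp only [Finset.sum_const, Finset.card_univ, Fintype.card_fin, nsmul_eq_mul, mul_one] at hsum
  exact (h none).not_ge hsum

lemma exists_forall_mem_halfSpaceFamily_iff {S : Finset (Option (Fin m))} (hS : S.Nonempty) :
    ∃ x : EuclideanSpace ℝ (Fin m), -1 < ∑ i, x i ∧ ∀ a, x ∈ halfSpaceFamily m a ↔ a ∉ S := by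
  classical
  set S' := Finset.univ.filter (some · ∈ S)
  set c : ℝ := if none ∈ S then 1 else m + 1
  have hc : 1 ≤ c := by
    unfold c
    split_ifs <;> linarith [(m.cast_nonneg : (0 : ℝ) ≤ m)]
  set x := WithLp.toLp 2 fun i : Fin m => if some i ∈ S then c else 0
  have hsum : ∑ i, x i = S'.card * c := by simp [x, S', Finset.sum_ite]
  refine ⟨x, by rw [hsum]; nlinarith [S'.card.cast_nonneg (α := ℝ)], fun a => ?_⟩
  cases a with
  | some i => by_cases hi : some i ∈ S <;> simp [halfSpaceFamily, x, hi, hc.not_gt]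
  | none =>
    change (m : ℝ) < ∑ i, x i ↔ none ∉ S
    rw [hsum]
    by_cases hn : none ∈ S
    · have hcard : (S'.card : ℝ) ≤ m := by
        exact_mod_cast (Finset.card_le_univ _).trans_eq (Fintype.card_fin m)
      simpa [c, hn] using hcard
    · obtain ⟨a, ha⟩ := hS
      obtain ⟨i, rfl⟩ := Option.ne_none_iff_exists'.1 (ne_of_mem_of_not_mem ha hn)
      have hcard : (1 : ℝ) ≤ S'.card := by
        exact_mod_cast Finset.card_pos.2 ⟨i, by simpa [S'] using ha⟩
      simp only [c, hn, if_false, not_false_eq_true, iff_true]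
      nlinarith

theorem hasOpenRealization_interClosure {n : ℕ} (hm : 1 ≤ m)
    (M : Option (Fin m) → Finset (Fin n)) : HasOpenRealization n (interClosure M) m := by
  set H := {x : EuclideanSpace ℝ (Fin m) | -1 < ∑ i, x i}
  refine ⟨fun j => H ∩ ⋂ (a) (_ : j ∉ M a), halfSpaceFamily m a, fun j => ?_, fun j => ?_,
    codeOf_eq_interClosure exists_notMem_halfSpaceFamily
      (fun S hS => exists_forall_mem_halfSpaceFamily_iff hS) ⟨WithLp.toLp 2 fun _ => -1, ?_⟩⟩
  · exact (convex_halfSpace_gt isLinearMap_sum_coord _).inter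
      (convex_iInter fun a => convex_iInter fun _ => convex_halfSpaceFamily a)
  · exact (isOpen_lt continuous_const (by fun_prop)).inter
      (isOpen_iInter_of_finite fun a => isOpen_iInter_of_finite fun _ => isOpen_halfSpaceFamily a)
  · simpa [H] using Nat.one_le_iff_ne_zero.1 hm

end HalfSpaceFamily

lemma Finset.exists_ssubset_antichain {α : Type*} {s : Finset α} {k m : ℕ} (hk : k < s.card)
    (hm : m ≤ s.card.choose k) :
    ∃ T : Fin m → Finset α, (∀ i, T i ⊂ s) ∧ ∀ i j, T i ⊆ T j → i = j := by
  obtain ⟨f⟩ := Function.Embedding.nonempty_of_card_le (α := Fin m) (β := s.powersetCard k)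
    (by simpa using hm)
  have hf : ∀ i, (f i : Finset α) ⊆ s ∧ (f i : Finset α).card = k := fun i =>
    Finset.mem_powersetCard.1 (f i).2
  refine ⟨fun i => f i, fun i => Finset.ssubset_iff_subset_ne.2 ⟨(hf i).1, fun h => ?_⟩,
    fun i j h => f.injective (Subtype.ext (Finset.eq_of_subset_of_card_le h ?_))⟩
  · have hki := (hf i).2
    rw [show (f i : Finset α) = s from h] at hki
    omega
  · rw [(hf i).2, (hf j).2]

section PetalFamily

variable {n m : ℕ} {z : Fin n} {T : Fin m → Finset (Fin n)}

def petalFamily (z : Fin n) (T : Fin m → Finset (Fin n)) : Option (Fin m) → Finset (Fin n)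
  | none => Finset.univ.erase z
  | some i => insert z (T i)

lemma notMem_of_ssubset_erase {t : Finset (Fin n)} (ht : t ⊂ Finset.univ.erase z) : z ∉ t :=
  fun h => Finset.notMem_erase z _ (ht.subset h)

lemma erase_not_subset_insert {t : Finset (Fin n)} (ht : t ⊂ Finset.univ.erase z) :
    ¬ Finset.univ.erase z ⊆ insert z t := by
  rw [Finset.subset_insert_iff_of_notMem (Finset.notMem_erase z _)]
  exact ht.2

lemma eq_of_petalFamily_subset (hT : ∀ i, T i ⊂ Finset.univ.erase z)
    (hTanti : ∀ i j, T i ⊆ T j → i = j) :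
    ∀ a b, petalFamily z T a ⊆ petalFamily z T b → a = b := by
  rintro (_ | i) (_ | j) h
  · rfl
  · exact absurd h (erase_not_subset_insert (hT j))
  · exact absurd (h (Finset.mem_insert_self z _)) (Finset.notMem_erase z _)
  · rw [petalFamily, petalFamily,
      Finset.insert_subset_insert_iff (notMem_of_ssubset_erase (hT i))] at h
    rw [hTanti i j h]

lemma petalFamily_nonempty (hT : ∀ i, T i ⊂ Finset.univ.erase z) (hm : 0 < m) :
    ∀ a, (petalFamily z T a).Nonempty
  | none => Finset.empty_ssubset.1 ((Finset.empty_subset _).trans_ssubset (hT ⟨0, hm⟩))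
  | some _ => Finset.insert_nonempty _ _

lemma ncard_maximals_interClosure_petalFamily (hT : ∀ i, T i ⊂ Finset.univ.erase z)
    (hTanti : ∀ i j, T i ⊆ T j → i = j) (hm : 0 < m) :
    {c | c ∈ interClosure (petalFamily z T) ∧
      ∀ c' ∈ interClosure (petalFamily z T), c ⊆ c' → c = c'}.ncard = m + 1 := by
  rw [ncard_maximals_interClosure (eq_of_petalFamily_subset hT hTanti)
    (petalFamily_nonempty hT hm)]
  simp

theorem not_hasOpenRealization_interClosure_petalFamily (hT : ∀ i, T i ⊂ Finset.univ.erase z)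
    (hTanti : ∀ i j, T i ⊆ T j → i = j) {d : ℕ} (hd : d < m) :
    ¬ HasOpenRealization n (interClosure (petalFamily z T)) d := by
  refine not_hasOpenRealization_of_sunflower (σ := Finset.univ.erase z) (τ := {z}) (ρ := T)
    (by simpa using hd) (apply_mem_interClosure _ none) (fun c hc h => ?_)
    (fun i => (hT i).subset) (fun c hc i j hij h => ?_)
    (fun i => ⟨_, apply_mem_interClosure _ (some i), ?_⟩)
  · obtain ⟨a, ha⟩ := exists_subset_of_mem_interClosure hc ⟨z, h (by simp)⟩
    cases a with
    | none => exact Finset.notMem_erase z _ (ha (h (by simp)))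
    | some j => exact erase_not_subset_insert (hT j) (Finset.union_subset_left (h.trans ha))
  · rcases hc with rfl | ⟨S, -, rfl⟩
    · exact absurd (hTanti i j ((Finset.union_subset_left h).trans (Finset.empty_subset _))) hij
    refine Finset.le_inf fun a ha => ?_
    cases a with
    | none => exact subset_rfl
    | some l =>
      have key : ∀ i', T i' ⊆ S.inf (petalFamily z T) → i' = l := fun i' h' =>
        hTanti i' l ((Finset.subset_insert_iff_of_notMem (notMem_of_ssubset_erase (hT i'))).1
          (h'.trans (Finset.inf_le ha)))
      exact absurd ((key i (Finset.union_subset_left h)).trans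
        (key j (Finset.union_subset_right h)).symm) hij
  · exact Finset.union_subset (Finset.subset_insert _ _)
      (Finset.singleton_subset_iff.2 (Finset.mem_insert_self _ _))

end PetalFamily

/-- For `n ≥ 2` and `1 ≤ m ≤ (n-1).choose ((n-1)/2)` there is an intersection complete code
on `n` neurons with exactly `m+1` maximal codewords and open embedding dimension exactly `m`. -/
theorem exists_code_with_odim {n m : ℕ} (hn : 2 ≤ n) (hm1 : 1 ≤ m)
    (hm2 : m ≤ (n-1).choose ((n-1)/2)) :
    ∃ C : Set (Finset (Fin n)), ∅ ∈ C ∧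
      (∀ c₁ ∈ C, ∀ c₂ ∈ C, c₁ ∩ c₂ ∈ C) ∧
      {c | c ∈ C ∧ ∀ c' ∈ C, c ⊆ c' → c = c'}.ncard = m + 1 ∧
      HasOpenRealization n C m ∧ ¬ HasOpenRealization n C (m-1) := by
  let z : Fin n := ⟨0, by omega⟩
  have hcard : (Finset.univ.erase z).card = n - 1 := by simp [Finset.card_erase_of_mem]
  obtain ⟨T, hT, hTanti⟩ := Finset.exists_ssubset_antichain (s := Finset.univ.erase z)
    (k := (n - 1) / 2) (m := m) (by omega) (by rwa [hcard])
  exact ⟨interClosure (petalFamily z T), empty_mem_interClosure _,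
    fun _ h₁ _ h₂ => inter_mem_interClosure h₁ h₂,
    ncard_maximals_interClosure_petalFamily hT hTanti hm1,
    hasOpenRealization_interClosure hm1 _,
    not_hasOpenRealization_interClosure_petalFamily hT hTanti (by omega)⟩
end

section
/- Let C ⊆ 2^{[n]} be a code with ∅ ∈ C, and let Δ(C) = {τ ⊆ [n] : τ ⊆ c for some c ∈ C}. Then C is intersection complete if and only if the following holds: for every σ ∈ Δ(C) \ C, every set X, and every realization U = (U_1,…,U_n) of C by arbitrary (possibly non-convex) subsets of X, there exists i ∈ [n] \ σ such that ⋂_{j∈σ} U_j ⊆ U_i. -/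
/-- A code `C` (with `∅ ∈ C`) is intersection complete iff: for every `σ` in the simplicial
complex of `C` that is not a codeword, and every realization of `C` by arbitrary subsets of
any set `X`, the region `⋂ j ∈ σ, U j` is contained in some `U i` with `i ∉ σ`. -/
theorem intersectionComplete_iff_singleCover {n : ℕ} (C : Set (Finset (Fin n)))
    (hempty : ∅ ∈ C) :
    (∀ c₁ ∈ C, ∀ c₂ ∈ C, c₁ ∩ c₂ ∈ C) ↔
    (∀ σ : Finset (Fin n), (∃ c ∈ C, σ ⊆ c) → σ ∉ C →
      ∀ (X : Type*) (U : Fin n → Set X), codeOf U = C →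
        ∃ i ∉ σ, (⋂ j ∈ σ, U j) ⊆ U i) := by
  classical
  constructor
  · intro hic σ hσΔ hσC X U hU
    -- take a card-minimal codeword containing σ
    set S : Set (Finset (Fin n)) := {c | c ∈ C ∧ σ ⊆ c} with hS
    obtain ⟨c, hc⟩ := hσΔ
    have hSne : S.Nonempty := ⟨c, hc.1, hc.2⟩
    obtain ⟨m, hmS, hmin⟩ := Set.exists_min_image S Finset.card S.toFinite hSne
    obtain ⟨hmC, hσm⟩ := hmS
    -- m is contained in every codeword containing σ
    have hmono : ∀ τ ∈ C, σ ⊆ τ → m ⊆ τ := by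
      intro τ hτ hστ
      have h1 : m ∩ τ ∈ C := hic m hmC τ hτ
      have h2 : (m ∩ τ) ∈ S := ⟨h1, Finset.subset_inter hσm hστ⟩
      have h3 := hmin _ h2
      have h4 : m ∩ τ = m :=
        Finset.eq_of_subset_of_card_le (Finset.inter_subset_left) h3
      intro x hx
      have : x ∈ m ∩ τ := by rw [h4]; exact hx
      exact (Finset.mem_inter.mp this).2
    -- pick i ∈ m \ σ
    have hss : σ ⊂ m := lt_of_le_of_ne hσm (fun h => hσC (h ▸ hmC))
    obtain ⟨i, him, hiσ⟩ := Finset.exists_of_ssubset hss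
    refine ⟨i, hiσ, ?_⟩
    intro x hx
    have hxU : ∀ j ∈ σ, x ∈ U j := by
      intro j hj
      exact Set.mem_iInter₂.mp hx j hj
    set τ : Finset (Fin n) := Finset.univ.filter (fun i => x ∈ U i) with hτdef
    have hτC : τ ∈ C := by
      rw [← hU]
      exact ⟨x, fun i => by simp [hτdef]⟩
    have hστ : σ ⊆ τ := fun j hj => by simp [hτdef, hxU j hj]
    have := hmono τ hτC hστ him
    simpa [hτdef] using this
  · intro h c₁ hc₁ c₂ hc₂
    by_contra hσC
    set σ := c₁ ∩ c₂ with hσdef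
    -- canonical realization
    let X := ULift.{_} {c : Finset (Fin n) // c ∈ C}
    let U : Fin n → Set X := fun i => {c | i ∈ c.down.1}
    have hcode : codeOf U = C := by
      ext τ
      constructor
      · rintro ⟨x, hx⟩
        have : τ = x.down.1 := Finset.ext fun i => (hx i)
        exact this ▸ x.down.2
      · intro hτ
        exact ⟨⟨⟨τ, hτ⟩⟩, fun i => Iff.rfl⟩
    obtain ⟨i, hiσ, hi⟩ := h σ ⟨c₁, hc₁, Finset.inter_subset_left⟩ hσC X U hcode
    have key : ∀ c (hc : c ∈ C), σ ⊆ c → i ∈ c := by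
      intro c hc hσc
      have : (⟨⟨c, hc⟩⟩ : X) ∈ ⋂ j ∈ σ, U j :=
        Set.mem_iInter₂.mpr fun j hj => hσc hj
      exact hi this
    exact hiσ (Finset.mem_inter.mpr
      ⟨key c₁ hc₁ Finset.inter_subset_left, key c₂ hc₂ Finset.inter_subset_right⟩)
end

section
/- Let C ⊆ 2^{[n]} be an intersection complete code and let U = (U_1,…,U_n) be an open convex realization of C in ℝ^d. Then there exists ε > 0 such that the sets V_i := trim(U_i, ε) form a non-degenerate open convex realization of C in ℝ^d. -/
/-- The trim of `U` by `ε`: points of `U` whose closed `ε`-ball is contained in `U`. -/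
def trim {d : ℕ} (U : Set (EuclideanSpace ℝ (Fin d))) (ε : ℝ) :
    Set (EuclideanSpace ℝ (Fin d)) :=
  {p ∈ U | Metric.closedBall p ε ⊆ U}

/-- The atom of `σ` in the arrangement `V`. -/
def atom {n d : ℕ} (V : Fin n → Set (EuclideanSpace ℝ (Fin d))) (σ : Finset (Fin n)) :
    Set (EuclideanSpace ℝ (Fin d)) :=
  {x | ∀ i, i ∈ σ ↔ x ∈ V i}

/-- Non-degeneracy: every atom of a codeword is top dimensional (its intersection with any
open set is empty or has nonempty interior), and for each nonempty `σ` the intersection of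
the boundaries `∂(V i)`, `i ∈ σ`, is contained in the boundary of `⋂ i ∈ σ, V i`. -/
def NonDegenerate {n d : ℕ} (V : Fin n → Set (EuclideanSpace ℝ (Fin d))) : Prop :=
  (∀ σ ∈ codeOf V, ∀ O : Set (EuclideanSpace ℝ (Fin d)), IsOpen O →
      atom V σ ∩ O = ∅ ∨ (interior (atom V σ ∩ O)).Nonempty) ∧
  (∀ σ : Finset (Fin n), σ.Nonempty →
      (⋂ i ∈ σ, frontier (V i)) ⊆ frontier (⋂ i ∈ σ, V i))

/-!
Choose `ε > 0` so that every codeword `c` is realized by a point whose closed `2ε`-ball lies in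
every `U i`, `i ∈ c`. By intersection completeness, `{i | B ⊆ U i}` is a codeword for every
nonempty `B`; taking for `B` a ball around `x` shows that the trims realize no new codewords and
yields a deep point `w` for every `x`. By convexity, moving from `x` towards `w` enters every trim
whose `U i` contains `ball x ε`, and moving away from `w` leaves the closure of every trim whose
`U i` contains `ball x ε` but not `closedBall x ε`; these give the two non-degeneracy conditions.
-/

open Metric Filter Topology

section Code

variable {n : ℕ} {X : Type*} {U : Fin n → Set X}

theorem exists_mem_codeOf_iff_subset
    (hIC : ∀ c₁ ∈ codeOf U, ∀ c₂ ∈ codeOf U, c₁ ∩ c₂ ∈ codeOf U) {B : Set X} (hB : B.Nonempty) :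
    ∃ c ∈ codeOf U, ∀ i, i ∈ c ↔ B ⊆ U i := by
  classical
  -- the codeword is the intersection of the finitely many codewords of points of `B`
  let S := Finset.univ.filter fun t : Finset (Fin n) => ∃ p ∈ B, ∀ i, i ∈ t ↔ p ∈ U i
  have hpS : ∀ p ∈ B, Finset.univ.filter (fun i => p ∈ U i) ∈ S := fun p hp =>
    Finset.mem_filter.2 ⟨Finset.mem_univ _, p, hp, by simp⟩
  obtain ⟨p₀, hp₀⟩ := hB
  have hS : S.Nonempty := ⟨_, hpS p₀ hp₀⟩
  refine ⟨S.inf' hS id, Finset.inf'_mem _ hIC _ hS id fun t ht => ?_, fun i => ?_⟩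
  · obtain ⟨p, -, hp⟩ := (Finset.mem_filter.1 ht).2
    exact ⟨p, hp⟩
  · simp only [Finset.mem_inf', id]
    refine ⟨fun h p hp => by simpa using h _ (hpS p hp), fun h t ht => ?_⟩
    obtain ⟨p, hp, hpt⟩ := (Finset.mem_filter.1 ht).2
    exact (hpt i).2 (h hp)

variable [PseudoMetricSpace X]

def RealizedAtDepth (U : Fin n → Set X) (r : ℝ) : Prop :=
  ∀ c ∈ codeOf U, ∃ z, (∀ i, i ∈ c ↔ z ∈ U i) ∧ ∀ i ∈ c, closedBall z r ⊆ U i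

theorem RealizedAtDepth.mono {r s : ℝ} (h : RealizedAtDepth U r) (hsr : s ≤ r) :
    RealizedAtDepth U s := fun c hc => by
  obtain ⟨z, hz, hzr⟩ := h c hc
  exact ⟨z, hz, fun i hi => (closedBall_subset_closedBall hsr).trans (hzr i hi)⟩

theorem RealizedAtDepth.exists_closedBall_subset {r : ℝ} (h : RealizedAtDepth U r)
    (hIC : ∀ c₁ ∈ codeOf U, ∀ c₂ ∈ codeOf U, c₁ ∩ c₂ ∈ codeOf U) {B : Set X} (hB : B.Nonempty) :
    ∃ w, ∀ i, B ⊆ U i → closedBall w r ⊆ U i := by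
  obtain ⟨c, hc, hci⟩ := exists_mem_codeOf_iff_subset hIC hB
  obtain ⟨w, -, hw⟩ := h c hc
  exact ⟨w, fun i hi => hw i ((hci i).2 hi)⟩

theorem exists_pos_realizedAtDepth (hU : ∀ i, IsOpen (U i)) : ∃ r > 0, RealizedAtDepth U r := by
  have hsmall : ∀ c, ∀ᶠ r in 𝓝 (0 : ℝ),
      c ∈ codeOf U → ∃ z, (∀ i, i ∈ c ↔ z ∈ U i) ∧ ∀ i ∈ c, closedBall z r ⊆ U i := by
    intro c
    by_cases hc : c ∈ codeOf U
    · obtain ⟨z, hz⟩ := hc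
      have hmem : (⋂ i ∈ c, U i) ∈ 𝓝 z :=
        (isOpen_biInter_finset fun i _ => hU i).mem_nhds (Set.mem_iInter₂.2 fun i hi => (hz i).1 hi)
      filter_upwards [eventually_closedBall_subset hmem] with r hr _
      exact ⟨z, hz, fun i hi => hr.trans (Set.biInter_subset_of_mem hi)⟩
    · exact Eventually.of_forall fun _ h => absurd h hc
  obtain ⟨r, hr, hr₀⟩ := ((eventually_all.2 hsmall).filter_mono nhdsWithin_le_nhds |>.and
    (self_mem_nhdsWithin (s := Set.Ioi 0))).exists
  exact ⟨r, hr₀, hr⟩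

end Code

theorem Convex.closedBall_combo_subset {E : Type*} [NormedAddCommGroup E] [NormedSpace ℝ E]
    {U : Set E} (hU : Convex ℝ U) {x w : E} {ε s : ℝ} (hε : 0 < ε) (hs₀ : 0 < s) (hs₁ : s ≤ 1)
    (hx : ball x ε ⊆ U) (hw : closedBall w (2 * ε) ⊆ U) :
    closedBall ((1 - s) • x + s • w) ε ⊆ U := by
  intro z hz
  set v := z - ((1 - s) • x + s • w) with hv
  have hvε : ‖v‖ ≤ ε := by rwa [mem_closedBall, dist_eq_norm] at hz
  have hx' : x + (1 - s) • v ∈ U := hx <| by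
    rw [mem_ball, dist_eq_norm, add_sub_cancel_left, norm_smul, Real.norm_of_nonneg (by linarith)]
    nlinarith [norm_nonneg v]
  have hw' : w + (2 - s) • v ∈ U := hw <| by
    rw [mem_closedBall, dist_eq_norm, add_sub_cancel_left, norm_smul,
      Real.norm_of_nonneg (by linarith)]
    nlinarith [norm_nonneg v]
  -- `z` splits along `ball x ε` and `closedBall w (2 * ε)` since `(1 - s) ^ 2 + s * (2 - s) = 1`
  have hcombo : (1 - s) • (x + (1 - s) • v) + s • (w + (2 - s) • v) = z := by
    rw [hv]; module
  exact hcombo ▸ hU hx' hw' (by linarith) hs₀.le (by ring)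

section Trim

variable {n d : ℕ}

local notation "E" => EuclideanSpace ℝ (Fin d)

theorem mem_trim_iff {U : Set E} {ε : ℝ} (hε : 0 ≤ ε) {p : E} :
    p ∈ trim U ε ↔ closedBall p ε ⊆ U :=
  ⟨And.right, fun h => ⟨h (mem_closedBall_self hε), h⟩⟩

theorem convex_trim {U : Set E} (hU : Convex ℝ U) (ε : ℝ) : Convex ℝ (trim U ε) := by
  rintro p ⟨hpU, hp⟩ q ⟨hqU, hq⟩ a b ha hb hab
  refine ⟨hU hpU hqU ha hb hab, fun z hz => ?_⟩
  set v := z - (a • p + b • q) with hv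
  have hball : ∀ y : E, y + v ∈ closedBall y ε := fun y => by
    rwa [mem_closedBall, dist_eq_norm, add_sub_cancel_left, ← dist_eq_norm]
  obtain rfl : b = 1 - a := by linarith
  have hcombo : a • (p + v) + (1 - a) • (q + v) = z := by rw [hv]; module
  exact hcombo ▸ hU (hp (hball p)) (hq (hball q)) ha hb hab

theorem trim_eq_compl_cthickening {U : Set E} (hU : IsOpen U) {ε : ℝ} (hε : 0 ≤ ε) :
    trim U ε = (cthickening ε Uᶜ)ᶜ := by
  ext p
  rw [mem_trim_iff hε, cthickening_eq_biUnion_closedBall _ hε, hU.isClosed_compl.closure_eq]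
  simp [Set.subset_def, mem_closedBall, dist_comm, not_imp_comm]

theorem isOpen_trim {U : Set E} (hU : IsOpen U) {ε : ℝ} (hε : 0 ≤ ε) : IsOpen (trim U ε) := by
  rw [trim_eq_compl_cthickening hU hε]
  exact isClosed_cthickening.isOpen_compl

theorem ball_subset_of_mem_closure_trim {U : Set E} {ε : ℝ} {x : E}
    (hx : x ∈ closure (trim U ε)) : ball x ε ⊆ U := by
  intro z hz
  rw [mem_ball] at hz
  obtain ⟨p, hp, hxp⟩ := Metric.mem_closure_iff.1 hx (ε - dist z x) (by linarith)
  exact hp.2 (by rw [mem_closedBall]; linarith [dist_triangle z x p])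

theorem add_smul_sub_notMem_closure_trim {U : Set E} (hU : Convex ℝ U) {ε t : ℝ} (hε : 0 < ε)
    (ht : 0 < t) {x w : E} (hw : closedBall w (2 * ε) ⊆ U) (hx : ¬closedBall x ε ⊆ U) :
    x + t • (x - w) ∉ closure (trim U ε) := fun hy => hx <| by
  have hs₀ : 0 < t / (1 + t) := by positivity
  have hs₁ : t / (1 + t) ≤ 1 := by rw [div_le_one (by positivity)]; linarith
  have hcombo : (1 - t / (1 + t)) • (x + t • (x - w)) + (t / (1 + t)) • w = x := by
    match_scalars <;> field_simp <;> ring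
  simpa only [hcombo] using
    hU.closedBall_combo_subset hε hs₀ hs₁ (ball_subset_of_mem_closure_trim hy) hw

theorem mem_closure_biInter_trim {ι : Type*} {U : ι → Set E} (hU : ∀ i, Convex ℝ (U i)) {ε : ℝ}
    (hε : 0 < ε) {s : Set ι} {x w : E} (hx : ∀ i ∈ s, ball x ε ⊆ U i)
    (hw : ∀ i ∈ s, closedBall w (2 * ε) ⊆ U i) :
    x ∈ closure (⋂ i ∈ s, trim (U i) ε) := by
  have hlim : Tendsto (fun t : ℝ => (1 - t) • x + t • w) (𝓝[>] 0) (𝓝 x) := by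
    have hcont : Continuous fun t : ℝ => (1 - t) • x + t • w := by fun_prop
    simpa using (hcont.tendsto 0).mono_left nhdsWithin_le_nhds
  refine mem_closure_of_tendsto hlim ?_
  filter_upwards [Ioc_mem_nhdsGT zero_lt_one] with t ht
  exact Set.mem_iInter₂.2 fun i hi => (mem_trim_iff hε.le).2 <|
    (hU i).closedBall_combo_subset hε ht.1 ht.2 (hx i hi) (hw i hi)

theorem mem_interior_atom_inter {V : Fin n → Set E} (hV : ∀ i, IsOpen (V i)) {σ : Finset (Fin n)}
    {O : Set E} (hO : IsOpen O) {y : E} (hyO : y ∈ O) (hyσ : ∀ i ∈ σ, y ∈ V i)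
    (hyσc : ∀ i ∉ σ, y ∉ closure (V i)) :
    y ∈ interior (atom V σ ∩ O) := by
  classical
  let W := O ∩ ⋂ i, if i ∈ σ then V i else (closure (V i))ᶜ
  have hWopen : IsOpen W := hO.inter <| isOpen_iInter_of_finite fun i => by
    split_ifs
    exacts [hV i, isClosed_closure.isOpen_compl]
  have hyW : y ∈ W := ⟨hyO, Set.mem_iInter.2 fun i => by
    split_ifs with hi
    exacts [hyσ i hi, hyσc i hi]⟩
  refine interior_maximal ?_ hWopen hyW
  rintro p ⟨hpO, hp⟩
  refine ⟨fun i => ?_, hpO⟩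
  have hpi := Set.mem_iInter.1 hp i
  by_cases hi : i ∈ σ
  · simpa [hi] using hpi
  · simp only [hi, if_false, Set.mem_compl_iff] at hpi
    exact ⟨fun h => absurd h hi, fun h => absurd (subset_closure h) hpi⟩

variable {U : Fin n → Set (EuclideanSpace ℝ (Fin d))} {ε : ℝ}

theorem codeOf_trim (hIC : ∀ c₁ ∈ codeOf U, ∀ c₂ ∈ codeOf U, c₁ ∩ c₂ ∈ codeOf U) (hε : 0 ≤ ε)
    (hU : RealizedAtDepth U ε) :
    codeOf (fun i => trim (U i) ε) = codeOf U := by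
  ext c
  constructor
  · rintro ⟨x, hx⟩
    obtain ⟨c', hc', hc'i⟩ :=
      exists_mem_codeOf_iff_subset hIC (B := closedBall x ε) (nonempty_closedBall.2 hε)
    convert hc'
    ext i
    rw [hx i, mem_trim_iff hε, hc'i]
  · intro hc
    obtain ⟨z, hz, hzε⟩ := hU c hc
    exact ⟨z, fun i => ⟨fun hi => (mem_trim_iff hε).2 (hzε i hi), fun hi => (hz i).2 hi.1⟩⟩

theorem interior_atom_trim_inter_nonempty (hconv : ∀ i, Convex ℝ (U i))
    (hopen : ∀ i, IsOpen (U i)) (hε : 0 < ε)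
    (hdeep : ∀ x : E, ∃ w, ∀ i, ball x ε ⊆ U i → closedBall w (2 * ε) ⊆ U i)
    {σ : Finset (Fin n)} {O : Set E} (hO : IsOpen O)
    (hne : (atom (fun i => trim (U i) ε) σ ∩ O).Nonempty) :
    (interior (atom (fun i => trim (U i) ε) σ ∩ O)).Nonempty := by
  obtain ⟨x, hxσ, hxO⟩ := hne
  obtain ⟨w, hw⟩ := hdeep x
  have hnear : ∀ᶠ y in 𝓝 x, y ∈ O ∧ (∀ i ∈ σ, y ∈ trim (U i) ε) ∧
      ∀ i, ¬ball x ε ⊆ U i → y ∉ closure (trim (U i) ε) := by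
    refine (hO.eventually_mem hxO).and <| ((eventually_all_finset σ).2 fun i hi =>
      (isOpen_trim (hopen i) hε.le).eventually_mem ((hxσ i).1 hi)).and <|
        eventually_all.2 fun i => ?_
    by_cases hi : ball x ε ⊆ U i
    · exact Eventually.of_forall fun _ h => absurd hi h
    · filter_upwards [isClosed_closure.isOpen_compl.eventually_mem
        (mt ball_subset_of_mem_closure_trim hi)] with y hy _ using hy
  have hlim : Tendsto (fun t : ℝ => x + t • (x - w)) (𝓝[>] 0) (𝓝 x) := by
    have hcont : Continuous fun t : ℝ => x + t • (x - w) := by fun_prop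
    simpa using (hcont.tendsto 0).mono_left nhdsWithin_le_nhds
  obtain ⟨t, ⟨hyO, hyσ, hyfar⟩, ht⟩ :=
    ((hlim.eventually hnear).and (self_mem_nhdsWithin (s := Set.Ioi 0))).exists
  refine ⟨_, mem_interior_atom_inter (fun i => isOpen_trim (hopen i) hε.le) hO hyO hyσ
    fun i hi => ?_⟩
  by_cases hxi : ball x ε ⊆ U i
  · exact add_smul_sub_notMem_closure_trim (hconv i) hε ht (hw i hxi)
      fun h => hi ((hxσ i).2 ((mem_trim_iff hε.le).2 h))
  · exact hyfar i hxi

theorem biInter_frontier_trim_subset (hconv : ∀ i, Convex ℝ (U i))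
    (hopen : ∀ i, IsOpen (U i)) (hε : 0 < ε)
    (hdeep : ∀ x : E, ∃ w, ∀ i, ball x ε ⊆ U i → closedBall w (2 * ε) ⊆ U i)
    {σ : Finset (Fin n)} (hσ : σ.Nonempty) :
    (⋂ i ∈ σ, frontier (trim (U i) ε)) ⊆ frontier (⋂ i ∈ σ, trim (U i) ε) := by
  intro x hx
  have hxσ : ∀ i ∈ σ, x ∈ closure (trim (U i) ε) \ trim (U i) ε := fun i hi =>
    (isOpen_trim (hopen i) hε.le).frontier_eq ▸ Set.mem_iInter₂.1 hx i hi
  have hball : ∀ i ∈ σ, ball x ε ⊆ U i := fun i hi =>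
    ball_subset_of_mem_closure_trim (hxσ i hi).1
  obtain ⟨w, hw⟩ := hdeep x
  obtain ⟨i₀, hi₀⟩ := hσ
  rw [(isOpen_biInter_finset fun i _ => isOpen_trim (hopen i) hε.le).frontier_eq]
  exact ⟨mem_closure_biInter_trim hconv hε hball fun i hi => hw i (hball i hi),
    fun h => (hxσ i₀ hi₀).2 (Set.mem_iInter₂.1 h i₀ hi₀)⟩

end Trim

theorem trim_realization_nondegenerate_general {n d : ℕ} (C : Set (Finset (Fin n)))
    (hIC : ∀ c₁ ∈ C, ∀ c₂ ∈ C, c₁ ∩ c₂ ∈ C)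
    (U : Fin n → Set (EuclideanSpace ℝ (Fin d)))
    (hconv : ∀ i, Convex ℝ (U i)) (hopen : ∀ i, IsOpen (U i)) (hcode : codeOf U = C) :
    ∃ ε > (0 : ℝ),
      (∀ i, Convex ℝ (trim (U i) ε)) ∧ (∀ i, IsOpen (trim (U i) ε)) ∧
      codeOf (fun i => trim (U i) ε) = C ∧
      NonDegenerate (fun i => trim (U i) ε) := by
  subst hcode
  obtain ⟨δ, hδ, hU⟩ := exists_pos_realizedAtDepth hopen
  have hε : 0 < δ / 2 := half_pos hδ
  have hU2 : RealizedAtDepth U (2 * (δ / 2)) := by rwa [mul_div_cancel₀ δ two_ne_zero]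
  have hdeep : ∀ x, ∃ w, ∀ i, ball x (δ / 2) ⊆ U i → closedBall w (2 * (δ / 2)) ⊆ U i :=
    fun x => hU2.exists_closedBall_subset hIC (nonempty_ball.2 hε)
  refine ⟨δ / 2, hε, fun i => convex_trim (hconv i) _, fun i => isOpen_trim (hopen i) hε.le,
    codeOf_trim hIC hε.le (hU.mono (by linarith)), fun σ _ O hO => ?_,
    fun σ hσ => biInter_frontier_trim_subset hconv hopen hε hdeep hσ⟩
  exact (Set.eq_empty_or_nonempty _).imp_right
    (interior_atom_trim_inter_nonempty hconv hopen hε hdeep hO)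

/-- Trimming an open convex realization of an intersection complete code by a small enough
`ε` yields a non-degenerate open convex realization of the same code. -/
theorem trim_realization_nondegenerate {n d : ℕ} (C : Set (Finset (Fin n)))
    (hempty : ∅ ∈ C) (hIC : ∀ c₁ ∈ C, ∀ c₂ ∈ C, c₁ ∩ c₂ ∈ C)
    (U : Fin n → Set (EuclideanSpace ℝ (Fin d)))
    (hconv : ∀ i, Convex ℝ (U i)) (hopen : ∀ i, IsOpen (U i)) (hcode : codeOf U = C) :
    ∃ ε > (0 : ℝ),
      (∀ i, Convex ℝ (trim (U i) ε)) ∧ (∀ i, IsOpen (trim (U i) ε)) ∧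
      codeOf (fun i => trim (U i) ε) = C ∧
      NonDegenerate (fun i => trim (U i) ε) :=
  trim_realization_nondegenerate_general C hIC U hconv hopen hcode
end

section
/- Let U ⊆ ℝ^d be a nonempty convex open set, let B be a dense subset of the boundary ∂U, and for each b ∈ B let f_b : ℝ^d → ℝ be a nonzero linear functional with f_b(x) ≥ f_b(b) for all x ∈ U (a supporting hyperplane for U at b). Then the set {x ∈ ℝ^d : f_b(x) > f_b(b) for all b ∈ B} is contained in the closure of U. -/
set_option maxHeartbeats 1000000 in
/-- If `B` is dense in the boundary of a nonempty convex open set `U ⊆ ℝ^d` and for each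
`b ∈ B` there is a supporting functional `f b` for `U` at `b`, then the intersection of the
open halfspaces `{x | f b x > f b b}` over `b ∈ B` is contained in the closure of `U`. -/
theorem dense_halfspaces_subset_closure {d : ℕ}
    (U : Set (EuclideanSpace ℝ (Fin d))) (hne : U.Nonempty)
    (hconv : Convex ℝ U) (hopen : IsOpen U)
    (B : Set (EuclideanSpace ℝ (Fin d)))
    (hB : B ⊆ frontier U) (hdense : frontier U ⊆ closure B)
    (f : EuclideanSpace ℝ (Fin d) → (EuclideanSpace ℝ (Fin d) →ₗ[ℝ] ℝ))
    (hf0 : ∀ b ∈ B, f b ≠ 0)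
    (hsupp : ∀ b ∈ B, ∀ x ∈ U, f b b ≤ f b x) :
    {x | ∀ b ∈ B, f b b < f b x} ⊆ closure U := by
  intro x hx
  by_contra hxc
  obtain ⟨u, hu⟩ := hne
  obtain ⟨r, hr, hball⟩ := Metric.isOpen_iff.1 hopen u hu
  -- the path from u to x
  set γ : ℝ → EuclideanSpace ℝ (Fin d) := fun s => u + s • (x - u) with hγ
  have hγcont : Continuous γ := by continuity
  have hγ0 : γ 0 = u := by simp [hγ]
  have hγ1 : γ 1 = x := by simp [hγ]
  set S : Set ℝ := {s | γ s ∈ closure U} ∩ Set.Icc 0 1 with hS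
  have hScl : IsClosed S :=
    (isClosed_closure.preimage hγcont).inter isClosed_Icc
  have hSne : S.Nonempty := ⟨0, by simp [hS, hγ0, subset_closure hu]⟩
  have hSbdd : BddAbove S := BddAbove.mono Set.inter_subset_right (bddAbove_Icc)
  set t : ℝ := sSup S with ht
  have htS : t ∈ S := hScl.csSup_mem hSne hSbdd
  have htz : γ t ∈ closure U := htS.1
  have ht0 : 0 ≤ t := htS.2.1
  have ht1 : t ≤ 1 := htS.2.2
  have htne1 : t ≠ 1 := by
    intro h
    exact hxc (by rwa [h, hγ1] at htz)
  have ht1' : t < 1 := lt_of_le_of_ne ht1 htne1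
  -- γ t is on the frontier
  have hzfr : γ t ∈ frontier U := by
    rw [frontier, hopen.interior_eq]
    refine ⟨htz, fun hmem => ?_⟩
    have : {s : ℝ | γ s ∈ U} ∈ nhds t :=
      hγcont.continuousAt.preimage_mem_nhds (hopen.mem_nhds hmem)
    obtain ⟨ε, hε, hεsub⟩ := Metric.mem_nhds_iff.1 this
    set t' : ℝ := min (t + ε / 2) 1 with ht'
    have ht'mem : γ t' ∈ U := by
      apply hεsub
      simp only [Metric.mem_ball, Real.dist_eq]
      have h1 : t ≤ t' := le_min (by linarith) ht1
      have h2 : t' ≤ t + ε / 2 := min_le_left _ _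
      rw [abs_of_nonneg (by linarith)]
      linarith
    have ht'S : t' ∈ S := by
      refine ⟨subset_closure ht'mem, ⟨le_trans ht0 (le_min (by linarith) ht1), min_le_right _ _⟩⟩
    have : t' ≤ t := le_csSup hSbdd ht'S
    have : t < t' := lt_min (by linarith) ht1'
    linarith
  set z := γ t with hz
  -- pick b ∈ B close to z
  have hzB : z ∈ closure B := hdense hzfr
  have hpos : 0 < (1 - t) * (r / 2) := by
    apply mul_pos (by linarith) (by linarith)
  obtain ⟨b, hbB, hbz⟩ := Metric.mem_closure_iff.1 hzB _ hpos
  -- the continuous version of f b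
  set L : EuclideanSpace ℝ (Fin d) →L[ℝ] ℝ := LinearMap.toContinuousLinearMap (f b) with hL
  have hLapp : ∀ y, L y = f b y := fun y => rfl
  have hLne : L ≠ 0 := by
    intro h
    apply hf0 b hbB
    ext y
    have := congrArg (fun (M : EuclideanSpace ℝ (Fin d) →L[ℝ] ℝ) => M y) h
    simpa [hLapp] using this
  have hLnorm : 0 < ‖L‖ := norm_pos_iff.2 hLne
  set c : ℝ := f b b with hc
  have hzc : z = u + t • (x - u) := rfl
  clear_value c L z t S
  -- key estimate: L u ≥ c + (r/2) * ‖L‖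
  have hMnn : 0 ≤ L u - c := by
    have := hsupp b hbB u hu
    simp only [hLapp]; linarith
  have hkey : ‖L‖ ≤ (L u - c) / (r / 2) := by
    apply ContinuousLinearMap.opNorm_le_bound _ (by positivity)
    intro v
    rcases eq_or_ne v 0 with rfl | hv
    · simp
    · have hvn : 0 < ‖v‖ := norm_pos_iff.2 hv
      set e : EuclideanSpace ℝ (Fin d) := ‖v‖⁻¹ • v with he
      have hen : ‖e‖ = 1 := norm_smul_inv_norm hv
      have haux : ∀ σ : ℝ, |σ| = 1 → σ * ((r / 2) * L e) ≤ L u - c := by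
        intro σ hσ
        have hmem : u - σ • (r / 2) • e ∈ Metric.ball u r := by
          simp only [Metric.mem_ball, dist_eq_norm]
          have h3 : ‖u - σ • (r / 2) • e - u‖ = |σ| * |r / 2| * ‖e‖ := by
            rw [sub_sub_cancel_left, norm_neg, norm_smul, norm_smul, Real.norm_eq_abs,
              Real.norm_eq_abs, mul_assoc]
          rw [h3, hσ, hen, abs_of_nonneg (by positivity)]
          linarith
        have h4 := hsupp b hbB _ (hball hmem)
        simp only [hLapp] at *
        rw [map_sub, map_smul, map_smul, smul_eq_mul, smul_eq_mul] at h4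
        linarith
      have h1 := haux 1 (by norm_num)
      have h2 := haux (-1) (by norm_num)
      rw [one_mul] at h1
      rw [neg_one_mul, neg_le] at h2
      have hLve : L v = ‖v‖ * L e := by
        rw [he, map_smul, smul_eq_mul]
        field_simp
      have hLe : |L e| ≤ (L u - c) / (r / 2) := by
        rw [le_div_iff₀ (by positivity)]
        rcases abs_cases (L e) with ⟨h, _⟩ | ⟨h, _⟩ <;> rw [h] <;> nlinarith [h1, h2]
      have habs : |L v| ≤ (L u - c) / (r / 2) * ‖v‖ := by
        rw [hLve, abs_mul, abs_of_nonneg hvn.le]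
        have := mul_le_mul_of_nonneg_left hLe (norm_nonneg v)
        linarith
      simpa [Real.norm_eq_abs] using habs
  rw [le_div_iff₀ (by positivity)] at hkey
  have hLu : c + (r / 2) * ‖L‖ ≤ L u := by nlinarith [hkey]
  -- lower bound on L z - c
  have hLx : c ≤ L x := by
    rw [hc, hLapp]; exact le_of_lt (hx b hbB)
  have hLz : c + (1 - t) * (r / 2) * ‖L‖ ≤ L z := by
    have : L z = L u + t * (L x - L u) := by
      rw [hzc, map_add, map_smul, map_sub, smul_eq_mul]
    nlinarith [mul_le_mul_of_nonneg_left hLu (by linarith : (0:ℝ) ≤ 1 - t),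
      mul_le_mul_of_nonneg_left hLx ht0, this]
  -- upper bound via Lipschitz
  have hupper : L z - c ≤ ‖L‖ * ‖z - b‖ := by
    have h1 : L z - c = L (z - b) := by
      simp only [map_sub, hc, hLapp]
    rw [h1]
    exact le_trans (le_abs_self _) (L.le_opNorm _)
  have hzb : ‖z - b‖ < (1 - t) * (r / 2) := by
    rw [← dist_eq_norm]
    exact hbz
  nlinarith [hLz, hupper, hLnorm, hzb]
end

section
/- For all n ≥ 1 and all d ≥ 0: (a) if T_{n+1} has an open convex realization in ℝ^d, then T_n has an open convex realization in ℝ^d; and (b) if T_n has an open convex realization in ℝ^d, then T_{n+1} has an open convex realization in ℝ^{d+1}. (Hence the open embedding dimensions t_n := odim(T_n) satisfy t_n ≤ t_{n+1} ≤ t_n + 1.) -/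
/-- The tangled sunflower code `T_n ⊆ 2^{[2n]}` (neurons `0,…,2n-1`, zero-indexed):
codewords are the pairs `{2k, 2k+1}` for `k < n`, the set of even-indexed neurons,
the set of odd-indexed neurons, all singletons, and the empty set. -/
def Tcode (n : ℕ) : Set (Finset (Fin (2*n))) :=
  {σ | (∃ k : Fin n, σ = {⟨2*k.val, by omega⟩, ⟨2*k.val+1, by omega⟩})
     ∨ σ = Finset.univ.filter (fun i => i.val % 2 = 0)
     ∨ σ = Finset.univ.filter (fun i => i.val % 2 = 1)
     ∨ (∃ i, σ = {i})
     ∨ σ = ∅}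

/-!
Restricting a realization of `T (n+1)` to its first `2n` sets realizes `T n`.

Conversely, let `U` realize `T n` inside a ball. A codeword of `T n` is either contained in a
block `{2k, 2k+1}` or a parity class, so `T n` is closed under intersection. Append two open convex
sets `P 0`, `P 1` carrying the parity classes, so that the family realizes every codeword of
`T (n+1)` except those inside the new block `{2n, 2n+1}`. In `ℝ^d × ℝ` replace each set `S` by its
tent `{(x, r) | 0 < r, closedBall x r ⊆ S}`: the codeword of `(x, r)` is the intersection of the
codewords over `closedBall x r`, hence still in `T (n+1)`. Finally join the tents of `P 0` and
`P 1` with a common blob far below; the convex hulls do not change anything above height `0`, and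
below it they supply the codewords `{2n, 2n+1}`, `{2n}` and `{2n+1}`.
-/

open Metric Set Filter Topology

section Codes

variable {X : Type*} {m : ℕ}

open Classical in
noncomputable def codeword (U : Fin m → Set X) (x : X) : Finset (Fin m) :=
  Finset.univ.filter fun i => x ∈ U i

@[simp]
theorem mem_codeword {U : Fin m → Set X} {x : X} {i : Fin m} : i ∈ codeword U x ↔ x ∈ U i := by
  simp [codeword]

theorem mem_codeOf_iff {U : Fin m → Set X} {σ : Finset (Fin m)} :
    σ ∈ codeOf U ↔ ∃ x, codeword U x = σ :=
  exists_congr fun x => by simp only [Finset.ext_iff, mem_codeword, iff_comm]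

theorem codeword_mem_codeOf (U : Fin m → Set X) (x : X) : codeword U x ∈ codeOf U :=
  mem_codeOf_iff.2 ⟨x, rfl⟩

theorem nontrivial_of_codeOf {U : Fin m → Set X} {σ τ : Finset (Fin m)} (hσ : σ ∈ codeOf U)
    (hτ : τ ∈ codeOf U) (hστ : σ ≠ τ) : Nontrivial X := by
  obtain ⟨x, rfl⟩ := mem_codeOf_iff.1 hσ
  obtain ⟨y, rfl⟩ := mem_codeOf_iff.1 hτ
  exact ⟨x, y, fun h => hστ (h ▸ rfl)⟩

theorem codeOf_comp {k : ℕ} (U : Fin m → Set X) (f : Fin k → Fin m) :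
    codeOf (U ∘ f) = (fun σ => Finset.univ.filter fun j => f j ∈ σ) '' codeOf U := by
  ext τ
  simp only [mem_codeOf_iff, Set.mem_image, exists_exists_eq_and]
  refine exists_congr fun x => ?_
  simp [Finset.ext_iff]

theorem codeOf_preimage {Y : Type*} {f : X → Y} (hf : Function.Surjective f) (W : Fin m → Set Y) :
    codeOf (fun i => f ⁻¹' W i) = codeOf W := by
  ext σ
  refine ⟨fun ⟨x, hx⟩ => ⟨f x, hx⟩, fun ⟨y, hy⟩ => ?_⟩
  obtain ⟨x, rfl⟩ := hf y
  exact ⟨x, hy⟩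

/-- The indices whose member contains `A` form the intersection of the codewords of the points
of `A`. -/
theorem exists_mem_iff_subset_of_codeOf_subset {U : Fin m → Set X} {C : Set (Finset (Fin m))}
    (hinter : ∀ σ ∈ C, ∀ τ ∈ C, σ ∩ τ ∈ C) (hUC : codeOf U ⊆ C) {A : Set X} (hA : A.Nonempty) :
    ∃ σ ∈ C, ∀ i, i ∈ σ ↔ A ⊆ U i := by
  classical
  set s := Finset.univ.filter fun σ => ∃ x ∈ A, codeword U x = σ
  have hs : s.Nonempty := ⟨_, Finset.mem_filter.2 ⟨Finset.mem_univ _, hA.some, hA.some_mem, rfl⟩⟩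
  refine ⟨s.inf' hs id, ?_, fun i => ?_⟩
  · refine Finset.inf'_induction hs id (fun σ hσ τ hτ => hinter σ hσ τ hτ) fun σ hσ => ?_
    obtain ⟨x, -, rfl⟩ := (Finset.mem_filter.1 hσ).2
    exact hUC (codeword_mem_codeOf U x)
  · simp only [Finset.mem_inf' hs, s, Finset.mem_filter, Finset.mem_univ, true_and, id]
    exact ⟨fun h x hx => mem_codeword.1 (h _ ⟨x, hx, rfl⟩),
      fun h σ ⟨x, hx, hσ⟩ => hσ ▸ mem_codeword.2 (h hx)⟩

theorem exists_codeOf_inter_ball {E : Type*} [SeminormedAddCommGroup E] (U : Fin m → Set E)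
    (h : ∅ ∈ codeOf U) : ∃ R > 0, codeOf (fun i => U i ∩ ball 0 R) = codeOf U := by
  have : ∀ σ : codeOf U, ∃ x, codeword U x = σ := fun σ => mem_codeOf_iff.1 σ.2
  choose w hw using this
  obtain ⟨R, hR0, hR⟩ := (Set.finite_range w).isBounded.subset_ball_lt 0 0
  refine ⟨R, hR0, Set.ext fun σ => ⟨fun hσ => ?_, fun hσ => ?_⟩⟩
  · obtain ⟨x, rfl⟩ := mem_codeOf_iff.1 hσ
    by_cases hx : x ∈ ball (0 : E) R
    · convert codeword_mem_codeOf U x using 1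
      ext i; simp [hx]
    · convert h using 1
      ext i; simp [hx]
  · refine mem_codeOf_iff.2 ⟨w ⟨σ, hσ⟩, ?_⟩
    refine Eq.trans ?_ (hw ⟨σ, hσ⟩)
    ext i; simp [hR (Set.mem_range_self _)]

end Codes

section Tangled

/-- The blocks of `Fin N` are the pairs `{2k, 2k+1}`, i.e. the fibres of `i ↦ i / 2`. -/
def InOneBlock {N : ℕ} (σ : Finset (Fin N)) : Prop :=
  ∀ a ∈ σ, ∀ b ∈ σ, a.val / 2 = b.val / 2

theorem InOneBlock.mono {N : ℕ} {σ τ : Finset (Fin N)} (hτ : InOneBlock τ) (hστ : σ ⊆ τ) :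
    InOneBlock σ :=
  fun a ha b hb => hτ a (hστ ha) b (hστ hb)

theorem InOneBlock.filter_castLE {N M : ℕ} (h : N ≤ M) {σ : Finset (Fin M)} (hσ : InOneBlock σ) :
    InOneBlock (Finset.univ.filter fun j : Fin N => Fin.castLE h j ∈ σ) := fun a ha c hc => by
  simpa using hσ _ (Finset.mem_filter.1 ha).2 _ (Finset.mem_filter.1 hc).2

theorem empty_mem_Tcode (n : ℕ) : ∅ ∈ Tcode n :=
  Or.inr (Or.inr (Or.inr (Or.inr rfl)))

theorem singleton_mem_Tcode {n : ℕ} (i : Fin (2*n)) : {i} ∈ Tcode n :=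
  Or.inr (Or.inr (Or.inr (Or.inl ⟨i, rfl⟩)))

theorem InOneBlock.mem_Tcode {n : ℕ} {σ : Finset (Fin (2*n))} (hσ : InOneBlock σ) :
    σ ∈ Tcode n := by
  rcases σ.eq_empty_or_nonempty with rfl | ⟨a, ha⟩
  · exact empty_mem_Tcode n
  by_cases hsing : ∀ b ∈ σ, b = a
  · exact Finset.eq_singleton_iff_unique_mem.2 ⟨ha, hsing⟩ ▸ singleton_mem_Tcode a
  push Not at hsing
  obtain ⟨b, hb, hba⟩ := hsing
  have hab := hσ a ha b hb
  have hba' := Fin.val_ne_of_ne hba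
  refine Or.inl ⟨⟨a.val / 2, by omega⟩, Finset.ext fun i => ?_⟩
  simp only [Finset.mem_insert, Finset.mem_singleton, Fin.ext_iff]
  constructor
  · intro hi
    have := hσ i hi a ha
    omega
  · intro hi
    obtain rfl | rfl : i = a ∨ i = b := by simp only [Fin.ext_iff]; omega
    exacts [ha, hb]

theorem mem_Tcode_iff {n : ℕ} {σ : Finset (Fin (2*n))} :
    σ ∈ Tcode n ↔ InOneBlock σ ∨ ∃ b : Fin 2, ∀ i, i ∈ σ ↔ i.val % 2 = b.val := by
  constructor
  · rintro (⟨k, rfl⟩ | rfl | rfl | ⟨j, rfl⟩ | rfl)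
    · left; intro a ha b hb; simp [Fin.ext_iff] at ha hb; omega
    · exact Or.inr ⟨0, by simp⟩
    · exact Or.inr ⟨1, by simp⟩
    · left; intro a ha b hb; simp_all
    · left; simp [InOneBlock]
  · rintro (hσ | ⟨b, hb⟩)
    · exact hσ.mem_Tcode
    · have hb2 := b.isLt
      obtain rfl | rfl : b = 0 ∨ b = 1 := by simp only [Fin.ext_iff]; omega
      · exact Or.inr (Or.inl (Finset.ext fun i => by simp [hb]))
      · exact Or.inr (Or.inr (Or.inl (Finset.ext fun i => by simp [hb])))

theorem parityClass_mem_Tcode {n : ℕ} (b : Fin 2) :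
    (Finset.univ.filter fun i : Fin (2*n) => i.val % 2 = b.val) ∈ Tcode n :=
  mem_Tcode_iff.2 (Or.inr ⟨b, by simp⟩)

theorem Tcode_inter_mem {n : ℕ} {σ τ : Finset (Fin (2*n))} (hσ : σ ∈ Tcode n) (hτ : τ ∈ Tcode n) :
    σ ∩ τ ∈ Tcode n := by
  rcases mem_Tcode_iff.1 hσ with hσ | ⟨b, hb⟩
  · exact (hσ.mono Finset.inter_subset_left).mem_Tcode
  rcases mem_Tcode_iff.1 hτ with hτ | ⟨c, hc⟩
  · exact (hτ.mono Finset.inter_subset_right).mem_Tcode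
  by_cases hbc : b = c
  · subst hbc
    rwa [show σ = τ from Finset.ext fun i => (hb i).trans (hc i).symm, Finset.inter_self]
  · refine InOneBlock.mem_Tcode fun a ha => ?_
    simp only [Finset.mem_inter, hb, hc] at ha
    exact absurd (Fin.ext (ha.1.symm.trans ha.2)) hbc

theorem Tcode_restrict (n : ℕ) :
    (fun σ => Finset.univ.filter fun j => Fin.castLE (by omega) j ∈ σ) '' Tcode (n+1) =
      Tcode n := by
  ext τ
  simp only [Set.mem_image]
  constructor
  · rintro ⟨σ, hσ, rfl⟩
    rcases mem_Tcode_iff.1 hσ with hσ | ⟨b, hb⟩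
    · exact (hσ.filter_castLE _).mem_Tcode
    · exact mem_Tcode_iff.2 (Or.inr ⟨b, fun i => by simp [hb]⟩)
  · intro hτ
    rcases mem_Tcode_iff.1 hτ with hτ | ⟨b, hb⟩
    · refine ⟨τ.map (Fin.castLEEmb (by omega)), InOneBlock.mem_Tcode fun a ha c hc => ?_, ?_⟩
      · simp only [Finset.mem_map, Fin.castLEEmb_apply] at ha hc
        obtain ⟨a, ha, rfl⟩ := ha
        obtain ⟨c, hc, rfl⟩ := hc
        simpa using hτ a ha c hc
      · ext j; simp
    · exact ⟨_, parityClass_mem_Tcode b, Finset.ext fun j => by simp [hb]⟩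

end Tangled

section Tent

open scoped Pointwise

variable {E : Type*} [NormedAddCommGroup E]

def tent (S : Set E) : Set (E × ℝ) :=
  {p | 0 < p.2 ∧ closedBall p.1 p.2 ⊆ S}

theorem exists_closedBall_subset_iff_mem {m : ℕ} {U : Fin m → Set E} (hU : ∀ i, IsOpen (U i))
    (x : E) : ∃ r > 0, ∀ i, closedBall x r ⊆ U i ↔ x ∈ U i := by
  have : ∀ᶠ y in 𝓝 x, ∀ i, x ∈ U i → y ∈ U i :=
    eventually_all.2 fun i => eventually_imp_distrib_left.2 fun hx => (hU i).mem_nhds hx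
  obtain ⟨r, hr, hball⟩ := nhds_basis_closedBall.eventually_iff.1 this
  exact ⟨r, hr, fun i => ⟨fun h => h (mem_closedBall_self hr.le), fun hx _ hy => hball hy i hx⟩⟩

theorem tent_nonempty {S : Set E} (hS : IsOpen S) (hne : S.Nonempty) : (tent S).Nonempty := by
  obtain ⟨x, hx⟩ := hne
  obtain ⟨r, hr, hsub⟩ := nhds_basis_closedBall.mem_iff.1 (hS.mem_nhds hx)
  exact ⟨(x, r), hr, hsub⟩

def blob (R : ℝ) : Set (E × ℝ) :=
  ball (0, -(R + 2)) 1

theorem mem_blob {R : ℝ} {p : E × ℝ} :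
    p ∈ blob R ↔ ‖p.1‖ < 1 ∧ -(R + 3) < p.2 ∧ p.2 < -(R + 1) := by
  rw [blob, ← ball_prod_same, Set.mem_prod, mem_ball_zero_iff, Real.ball_eq_Ioo, Set.mem_Ioo]
  constructor <;> rintro ⟨h1, h2, h3⟩ <;> exact ⟨h1, by linarith, by linarith⟩

variable [NormedSpace ℝ E]

def tentHull (S : Set E) (R : ℝ) : Set (E × ℝ) :=
  convexHull ℝ (tent S ∪ blob R)

theorem Convex.tent [ProperSpace E] {S : Set E} (hS : Convex ℝ S) : Convex ℝ (tent S) := by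
  rintro p ⟨hp, hpS⟩ q ⟨hq, hqS⟩ u v hu hv huv
  have hpos : 0 < u * p.2 + v * q.2 := convex_Ioi (0 : ℝ) hp hq hu hv huv
  refine ⟨by simpa using hpos, ?_⟩
  calc closedBall (u • p + v • q).1 (u • p + v • q).2
      = u • closedBall p.1 p.2 + v • closedBall q.1 q.2 := by
        rw [smul_closedBall _ _ hp.le, smul_closedBall _ _ hq.le,
          closedBall_add_closedBall (by positivity) (by positivity), Real.norm_of_nonneg hu,
          Real.norm_of_nonneg hv]
        simp
    _ ⊆ u • S + v • S := Set.add_subset_add (Set.smul_set_mono hpS) (Set.smul_set_mono hqS)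
    _ ⊆ S := hS.set_combo_subset hu hv huv

theorem IsOpen.tent [ProperSpace E] {S : Set E} (hS : IsOpen S) : IsOpen (tent S) := by
  refine isOpen_iff_mem_nhds.2 fun p ⟨hp, hpS⟩ => ?_
  obtain ⟨δ, hδ, hthick⟩ := (isCompact_closedBall p.1 p.2).exists_thickening_subset_open hS hpS
  rw [thickening_closedBall hδ hp.le] at hthick
  filter_upwards [ball_mem_nhds p (half_pos hδ),
    (continuous_snd.isOpen_preimage _ isOpen_Ioi).mem_nhds hp] with q hq hq0
  refine ⟨hq0, (closedBall_subset_ball' ?_).trans hthick⟩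
  rw [mem_ball, Prod.dist_eq, max_lt_iff, Real.dist_eq, abs_lt] at hq
  linarith [hq.1, hq.2.2]

theorem convex_tentHull (S : Set E) (R : ℝ) : Convex ℝ (tentHull S R) :=
  convex_convexHull ℝ _

theorem IsOpen.tentHull [ProperSpace E] {S : Set E} (hS : IsOpen S) (R : ℝ) :
    IsOpen (tentHull S R) :=
  (hS.tent.union isOpen_ball).convexHull

/-- The hull stays inside the downward cone `{p | ‖p.1 - a.1‖ + p.2 ≤ a.2}` over the tent, which
contains the blob because the blob lies deep below the bounded set `S`. -/
theorem closedBall_subset_of_mem_tentHull [ProperSpace E] {S : Set E} {R : ℝ} (hSo : IsOpen S)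
    (hSc : Convex ℝ S) (hne : S.Nonempty) (hSR : S ⊆ ball 0 R) {p : E × ℝ}
    (hp : p ∈ tentHull S R) : closedBall p.1 p.2 ⊆ S := by
  set L := {p : E × ℝ | ∃ a ∈ tent S, ‖p.1 - a.1‖ + p.2 ≤ a.2}
  have hL : Convex ℝ L := by
    rintro p ⟨a, ha, hpa⟩ q ⟨b, hb, hqb⟩ u v hu hv huv
    refine ⟨u • a + v • b, hSc.tent ha hb hu hv huv, ?_⟩
    have hnorm : ‖(u • p + v • q).1 - (u • a + v • b).1‖ ≤ u * ‖p.1 - a.1‖ + v * ‖q.1 - b.1‖ := by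
      calc _ = ‖u • (p.1 - a.1) + v • (q.1 - b.1)‖ := by
            congr 1; simp only [Prod.fst_add, Prod.smul_fst, smul_sub]; abel
        _ ≤ _ := by
          refine (norm_add_le _ _).trans_eq ?_
          rw [norm_smul, norm_smul, Real.norm_of_nonneg hu, Real.norm_of_nonneg hv]
    simp only [Prod.snd_add, Prod.smul_snd, smul_eq_mul] at hnorm ⊢
    nlinarith [mul_le_mul_of_nonneg_left hpa hu, mul_le_mul_of_nonneg_left hqb hv]
  have hblob : blob R ⊆ L := by
    obtain ⟨a, ha⟩ := tent_nonempty hSo hne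
    refine fun b hb => ⟨a, ha, ?_⟩
    have ha1 : ‖a.1‖ < R := mem_ball_zero_iff.1 (hSR (ha.2 (mem_closedBall_self ha.1.le)))
    obtain ⟨hb1, -, hb2⟩ := mem_blob.1 hb
    linarith [norm_sub_le b.1 a.1, ha.1]
  have htent : tent S ⊆ L := fun a ha => ⟨a, ha, by simp⟩
  obtain ⟨a, ha, hpa⟩ := convexHull_min (Set.union_subset htent hblob) hL hp
  exact (closedBall_subset_closedBall' (by rw [dist_eq_norm]; linarith)).trans ha.2

theorem blob_center_mem_tentHull (S : Set E) (R : ℝ) : ((0 : E), -(R + 2)) ∈ tentHull S R :=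
  subset_convexHull ℝ _ (Or.inr (mem_ball_self one_pos))

theorem exists_mem_tentHull_snd_eq_zero {S : Set E} {R : ℝ} (hSo : IsOpen S) (hne : S.Nonempty)
    (hR : 0 < R) : ∃ p ∈ tentHull S R, p.2 = 0 := by
  obtain ⟨a, ha⟩ := tent_nonempty hSo hne
  obtain ⟨p, hp, hp0⟩ := (convex_tentHull S R).isPreconnected.intermediate_value
    (blob_center_mem_tentHull S R)
    (subset_convexHull ℝ _ (Or.inl ha)) continuousOn_snd ⟨by simp; linarith, ha.1.le⟩
  exact ⟨p, hp, hp0⟩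

end Tent

section Lift

variable {E : Type*} [NormedAddCommGroup E] [NormedSpace ℝ E] {m : ℕ}
  {U : Fin m → Set E} {N : Finset (Fin m)} {R : ℝ}

def liftFamily (U : Fin m → Set E) (N : Finset (Fin m)) (R : ℝ) : Fin m → Set (E × ℝ) :=
  fun i => if i ∈ N then tentHull (U i) R else tent (U i)

theorem tent_subset_liftFamily (i : Fin m) : tent (U i) ⊆ liftFamily U N R i := by
  unfold liftFamily; split_ifs
  exacts [fun p hp => subset_convexHull ℝ _ (Or.inl hp), subset_rfl]

theorem mem_of_mem_liftFamily_of_nonpos {p : E × ℝ} (hp : p.2 ≤ 0) {i : Fin m}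
    (h : p ∈ liftFamily U N R i) : i ∈ N := by
  unfold liftFamily at h; split_ifs at h with hi
  exacts [hi, absurd h.1 hp.not_gt]

variable [ProperSpace E]

theorem convex_liftFamily (hUc : ∀ i, Convex ℝ (U i)) (i : Fin m) :
    Convex ℝ (liftFamily U N R i) := by
  unfold liftFamily; split_ifs
  exacts [convex_tentHull _ R, (hUc i).tent]

theorem isOpen_liftFamily (hUo : ∀ i, IsOpen (U i)) (i : Fin m) : IsOpen (liftFamily U N R i) := by
  unfold liftFamily; split_ifs
  exacts [(hUo i).tentHull R, (hUo i).tent]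

variable (hUo : ∀ i, IsOpen (U i)) (hUc : ∀ i, Convex ℝ (U i))
  (hN : ∀ s ∈ N, (U s).Nonempty ∧ U s ⊆ ball 0 R)
include hUo hUc hN

theorem closedBall_subset_of_mem_liftFamily {p : E × ℝ} {i : Fin m}
    (h : p ∈ liftFamily U N R i) : closedBall p.1 p.2 ⊆ U i := by
  unfold liftFamily at h; split_ifs at h with hi
  exacts [closedBall_subset_of_mem_tentHull (hUo i) (hUc i) (hN i hi).1 (hN i hi).2 h, h.2]

theorem mem_liftFamily_iff_of_pos {p : E × ℝ} (hp : 0 < p.2) (i : Fin m) :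
    p ∈ liftFamily U N R i ↔ closedBall p.1 p.2 ⊆ U i :=
  ⟨closedBall_subset_of_mem_liftFamily hUo hUc hN, fun h => tent_subset_liftFamily i ⟨hp, h⟩⟩

/-- Above height `0` the codeword of `(x, r)` is the intersection of the codewords of `U` over
`closedBall x r`; at or below height `0` only members indexed by `N` are met. -/
theorem codeOf_liftFamily (hR : 0 < R) {C : Set (Finset (Fin m))}
    (hdisj : ∀ s ∈ N, ∀ t ∈ N, s ≠ t → Disjoint (U s) (U t))
    (hinter : ∀ σ ∈ C, ∀ τ ∈ C, σ ∩ τ ∈ C) (hUC : codeOf U ⊆ C) (hNC : ∀ σ ⊆ N, σ ∈ C)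
    (hC : ∀ σ ∈ C, σ ∈ codeOf U ∨ σ = N ∨ ∃ s ∈ N, σ = {s}) :
    codeOf (liftFamily U N R) = C := by
  refine Set.Subset.antisymm (fun σ hσ => ?_) (fun σ hσ => ?_)
  · obtain ⟨p, rfl⟩ := mem_codeOf_iff.1 hσ
    by_cases hp : 0 < p.2
    · obtain ⟨τ, hτ, hτi⟩ :=
        exists_mem_iff_subset_of_codeOf_subset hinter hUC ⟨p.1, mem_closedBall_self hp.le⟩
      convert hτ
      ext i; simp [hτi, mem_liftFamily_iff_of_pos hUo hUc hN hp]
    · exact hNC _ fun i hi => mem_of_mem_liftFamily_of_nonpos (not_lt.1 hp) (mem_codeword.1 hi)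
  rcases hC σ hσ with hσ | rfl | ⟨s, hs, rfl⟩
  · obtain ⟨x, rfl⟩ := mem_codeOf_iff.1 hσ
    obtain ⟨r, hr, hx⟩ := exists_closedBall_subset_iff_mem hUo x
    exact mem_codeOf_iff.2
      ⟨(x, r), Finset.ext fun i => by
        simp [mem_liftFamily_iff_of_pos hUo hUc hN (p := (x, r)) hr, hx]⟩
  · refine mem_codeOf_iff.2 ⟨(0, -(R + 2)), Finset.ext fun i => ?_⟩
    rw [mem_codeword]
    refine ⟨mem_of_mem_liftFamily_of_nonpos (p := ((0 : E), -(R + 2))) (by simp; linarith),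
      fun hi => ?_⟩
    simpa [liftFamily, hi] using blob_center_mem_tentHull (U i) R
  · obtain ⟨p, hp, hp0⟩ := exists_mem_tentHull_snd_eq_zero (hUo s) (hN s hs).1 hR
    have hps : p ∈ liftFamily U N R s := by simpa [liftFamily, hs] using hp
    have hcenter : ∀ {i}, p ∈ liftFamily U N R i → p.1 ∈ U i := fun h =>
      closedBall_subset_of_mem_liftFamily hUo hUc hN h (mem_closedBall_self hp0.ge)
    refine mem_codeOf_iff.2 ⟨p, Finset.ext fun i => ?_⟩
    rw [mem_codeword, Finset.mem_singleton]
    refine ⟨fun h => ?_, fun h => h ▸ hps⟩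
    by_contra hne
    exact (hdisj i (mem_of_mem_liftFamily_of_nonpos hp0.le h) s hs hne).le_bot
      ⟨hcenter h, hcenter hps⟩

end Lift

section ParityCore

variable {X : Type*} {n : ℕ}

def extendFamily (U : Fin (2*n) → Set X) (P : Fin 2 → Set X) : Fin (2*(n+1)) → Set X :=
  fun i => if h : i.val < 2*n then U ⟨i.val, h⟩ else P ⟨i.val % 2, Nat.mod_lt _ two_pos⟩

def newBlock (n : ℕ) : Finset (Fin (2*(n+1))) :=
  Finset.univ.filter fun i => 2*n ≤ i.val

theorem inOneBlock_newBlock (n : ℕ) : InOneBlock (newBlock n) := fun a ha b hb => by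
  simp only [newBlock, Finset.mem_filter, Finset.mem_univ, true_and] at ha hb
  omega

theorem extendFamily_induction {U : Fin (2*n) → Set X} {P : Fin 2 → Set X} {p : Set X → Prop}
    (hU : ∀ i, p (U i)) (hP : ∀ b, p (P b)) (i : Fin (2*(n+1))) : p (extendFamily U P i) := by
  unfold extendFamily
  split_ifs
  exacts [hU _, hP _]

theorem mem_extendFamily_iff_of_forall_not_mem {U : Fin (2*n) → Set X} {P : Fin 2 → Set X} {y : X}
    (hy : ∀ b, y ∉ P b) (i : Fin (2*(n+1))) :
    y ∈ extendFamily U P i ↔ ∃ h : i.val < 2*n, y ∈ U ⟨i.val, h⟩ := by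
  unfold extendFamily
  split_ifs with h <;> simp [h, hy]

/-- `P b` is to become member `2n + b`: then `extendFamily U P` realizes exactly the codewords of
`T (n+1)` other than the nonempty subsets of `newBlock n`. -/
structure IsParityCore (U : Fin (2*n) → Set X) (P : Fin 2 → Set X) : Prop where
  nonempty : ∀ b, (P b).Nonempty
  mem_iff : ∀ b, ∀ y ∈ P b, ∀ i, y ∈ U i ↔ i.val % 2 = b.val
  inOneBlock : ∀ y, (∀ b, y ∉ P b) → InOneBlock (codeword U y)
  exists_codeword : ∀ τ, InOneBlock τ → ∃ y, (∀ b, y ∉ P b) ∧ codeword U y = τ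

namespace IsParityCore

variable {U : Fin (2*n) → Set X} {P : Fin 2 → Set X} (hP : IsParityCore U P) (hn : 1 ≤ n)
include hP

theorem extendFamily_subset {s : Fin (2*(n+1))} (hs : s ∈ newBlock n) :
    extendFamily U P s ⊆ U ⟨s.val % 2, by simp [newBlock] at hs; omega⟩ := by
  have : ¬ s.val < 2*n := by simp [newBlock] at hs; omega
  intro y hy
  simp only [extendFamily, this, dite_false] at hy
  exact (hP.mem_iff _ y hy _).2 (Nat.mod_mod _ _)

theorem nonempty_extendFamily {s : Fin (2*(n+1))} (hs : s ∈ newBlock n) :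
    (extendFamily U P s).Nonempty := by
  have : ¬ s.val < 2*n := by simp [newBlock] at hs; omega
  simpa [extendFamily, this] using hP.nonempty _

include hn

theorem disjoint {b c : Fin 2} (hbc : b ≠ c) : Disjoint (P b) (P c) := by
  refine Set.disjoint_left.2 fun y hb hc => hbc (Fin.ext ?_)
  have := (hP.mem_iff b y hb ⟨0, by omega⟩).symm.trans (hP.mem_iff c y hc ⟨0, by omega⟩)
  omega

theorem disjoint_extendFamily {s t : Fin (2*(n+1))} (hs : s ∈ newBlock n) (ht : t ∈ newBlock n)
    (hst : s ≠ t) : Disjoint (extendFamily U P s) (extendFamily U P t) := by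
  simp only [newBlock, Finset.mem_filter, Finset.mem_univ, true_and] at hs ht
  have := Fin.val_ne_of_ne hst
  simp only [extendFamily, show ¬ s.val < 2*n by omega, show ¬ t.val < 2*n by omega, dite_false]
  exact hP.disjoint hn fun h => by simp only [Fin.ext_iff] at h; omega

theorem mem_extendFamily_iff_of_mem {b : Fin 2} {y : X} (hy : y ∈ P b) (i : Fin (2*(n+1))) :
    y ∈ extendFamily U P i ↔ i.val % 2 = b.val := by
  unfold extendFamily
  split_ifs
  · exact hP.mem_iff b y hy _
  · refine ⟨fun hy' => ?_, fun h => by convert hy⟩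
    by_contra hne
    exact (hP.disjoint hn fun h => hne (congrArg Fin.val h).symm).le_bot ⟨hy, hy'⟩

theorem codeOf_extendFamily_subset : codeOf (extendFamily U P) ⊆ Tcode (n+1) := by
  intro σ hσ
  obtain ⟨y, rfl⟩ := mem_codeOf_iff.1 hσ
  by_cases hy : ∃ b, y ∈ P b
  · obtain ⟨b, hb⟩ := hy
    exact mem_Tcode_iff.2
      (Or.inr ⟨b, fun i => by rw [mem_codeword, hP.mem_extendFamily_iff_of_mem hn hb]⟩)
  push Not at hy
  refine InOneBlock.mem_Tcode fun a ha c hc => ?_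
  rw [mem_codeword, mem_extendFamily_iff_of_forall_not_mem hy] at ha hc
  obtain ⟨ha, ha'⟩ := ha
  obtain ⟨hc, hc'⟩ := hc
  exact hP.inOneBlock y hy _ (mem_codeword.2 ha') _ (mem_codeword.2 hc')

theorem mem_codeOf_extendFamily {σ : Finset (Fin (2*(n+1)))} (hσ : σ ∈ Tcode (n+1)) :
    σ ∈ codeOf (extendFamily U P) ∨ σ = newBlock n ∨ ∃ s ∈ newBlock n, σ = {s} := by
  rcases mem_Tcode_iff.1 hσ with hσ | ⟨b, hb⟩
  swap
  · obtain ⟨y, hy⟩ := hP.nonempty b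
    exact Or.inl (mem_codeOf_iff.2 ⟨y, Finset.ext fun i => by
      rw [mem_codeword, hP.mem_extendFamily_iff_of_mem hn hy, hb]⟩)
  by_cases hold : ∀ i ∈ σ, i.val < 2*n
  · obtain ⟨y, hy, hyσ⟩ := hP.exists_codeword _ (hσ.filter_castLE (by omega : 2*n ≤ 2*(n+1)))
    refine Or.inl (mem_codeOf_iff.2 ⟨y, Finset.ext fun i => ?_⟩)
    rw [mem_codeword, mem_extendFamily_iff_of_forall_not_mem hy]
    by_cases hi : i.val < 2*n
    · have := Finset.ext_iff.1 hyσ ⟨i.val, hi⟩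
      simp only [mem_codeword, Finset.mem_filter, Finset.mem_univ, true_and] at this
      simpa [hi] using this
    · simpa [hi] using fun h => hi (hold i h)
  push Not at hold
  obtain ⟨s, hs, hs'⟩ := hold
  have hsub : σ ⊆ newBlock n := fun i hi => by
    have := hσ i hi s hs
    simp [newBlock]
    omega
  right
  by_cases hsing : ∀ t ∈ σ, t = s
  · exact Or.inr ⟨s, hsub hs, Finset.eq_singleton_iff_unique_mem.2 ⟨hs, hsing⟩⟩
  push Not at hsing
  obtain ⟨t, ht, hts⟩ := hsing
  refine Or.inl (Finset.Subset.antisymm hsub fun i hi => ?_)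
  have h1 := hsub ht
  have h2 := Fin.val_ne_of_ne hts
  simp only [newBlock, Finset.mem_filter, Finset.mem_univ, true_and] at h1 hi
  obtain rfl | rfl : i = s ∨ i = t := by simp only [Fin.ext_iff]; omega
  exacts [hs, ht]

end IsParityCore

end ParityCore

section Cores

variable {X : Type*} {n : ℕ}

theorem not_inOneBlock_of_mem_iInter (hn : 2 ≤ n) {U : Fin (2*n) → Set X} {b : Fin 2} {y : X}
    (hy : y ∈ ⋂ (i : Fin (2*n)) (_ : i.val % 2 = b.val), U i) : ¬ InOneBlock (codeword U y) := by
  rw [Set.mem_iInter₂] at hy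
  intro h
  have := h ⟨b.val, by omega⟩ (mem_codeword.2 (hy _ (Nat.mod_eq_of_lt b.isLt)))
    ⟨b.val + 2, by omega⟩ (mem_codeword.2 (hy _ (by simp; omega)))
  simp at this

theorem isParityCore_iInter (hn : 2 ≤ n) {U : Fin (2*n) → Set X} (hU : codeOf U = Tcode n) :
    IsParityCore U fun b => ⋂ (i : Fin (2*n)) (_ : i.val % 2 = b.val), U i where
  nonempty b := by
    obtain ⟨y, hy⟩ := mem_codeOf_iff.1 (hU ▸ parityClass_mem_Tcode b)
    exact ⟨y, Set.mem_iInter₂.2 fun i hi => mem_codeword.1 (hy ▸ by simpa using hi)⟩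
  mem_iff b y hy i := by
    rcases mem_Tcode_iff.1 (hU ▸ codeword_mem_codeOf U y) with h | ⟨c, hc⟩
    · exact absurd h (not_inOneBlock_of_mem_iInter hn hy)
    have hbc := (hc ⟨b.val, by omega⟩).1
      (mem_codeword.2 (Set.mem_iInter₂.1 hy _ (Nat.mod_eq_of_lt b.isLt)))
    rw [← mem_codeword, hc]
    simp only at hbc
    omega
  inOneBlock y hy := by
    rcases mem_Tcode_iff.1 (hU ▸ codeword_mem_codeOf U y) with h | ⟨c, hc⟩
    · exact h
    · exact absurd (Set.mem_iInter₂.2 fun i hi => mem_codeword.1 ((hc i).2 hi)) (hy c)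
  exists_codeword τ hτ := by
    obtain ⟨y, hy⟩ := mem_codeOf_iff.1 (hU ▸ hτ.mem_Tcode)
    exact ⟨y, fun b hb => not_inOneBlock_of_mem_iInter hn hb (hy ▸ hτ), hy⟩

variable {E : Type*} [NormedAddCommGroup E] [NormedSpace ℝ E]

theorem exists_ball_subset_sdiff {U V : Set E} (hU : IsOpen U) (hVo : IsOpen V) (hVc : Convex ℝ V)
    (hVne : V.Nonempty) (h : ¬ U ⊆ V) : ∃ c, ∃ r > 0, ball c r ⊆ U \ V := by
  have hcl : ¬ U ⊆ closure V := fun hUV => h <| by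
    simpa [hU.interior_eq, hVo.interior_eq,
      hVc.interior_closure_eq_interior_of_nonempty_interior (by rwa [hVo.interior_eq])]
      using interior_mono hUV
  obtain ⟨x, hxU, hxV⟩ := Set.not_subset.1 hcl
  obtain ⟨r, hr, hball⟩ :=
    Metric.isOpen_iff.1 (hU.inter isClosed_closure.isOpen_compl) x ⟨hxU, hxV⟩
  exact ⟨x, r, hr, fun y hy => ⟨(hball hy).1, fun hyV => (hball hy).2 (subset_closure hyV)⟩⟩

theorem exists_ball_forall_mem_iff_of_Tcode_one {U : Fin (2*1) → Set E} (hUo : ∀ i, IsOpen (U i))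
    (hUc : ∀ i, Convex ℝ (U i)) (hU : codeOf U = Tcode 1) (b : Fin 2) :
    ∃ c, ∃ r > 0, ∀ y ∈ ball c r, ∀ i, y ∈ U i ↔ i.val % 2 = b.val := by
  have hcode : ∀ τ : Finset (Fin (2*1)), τ ∈ codeOf U := fun τ =>
    hU ▸ InOneBlock.mem_Tcode fun a _ b _ => by omega
  obtain ⟨x, hx⟩ := mem_codeOf_iff.1 (hcode Finset.univ)
  obtain ⟨y, hy⟩ := mem_codeOf_iff.1 (hcode {⟨b.val, by omega⟩})
  have hxV : x ∈ U ⟨1 - b.val, by omega⟩ := mem_codeword.1 (hx ▸ Finset.mem_univ _)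
  have hUV : ¬ U ⟨b.val, by omega⟩ ⊆ U ⟨1 - b.val, by omega⟩ := fun hsub => by
    have := mem_codeword.2 (hsub (mem_codeword.1 (hy ▸ Finset.mem_singleton_self _)))
    simp only [hy, Finset.mem_singleton, Fin.ext_iff] at this
    omega
  obtain ⟨c, r, hr, hsub⟩ := exists_ball_subset_sdiff (hUo _) (hUo _) (hUc _) ⟨x, hxV⟩ hUV
  refine ⟨c, r, hr, fun z hz i => ?_⟩
  obtain ⟨hzb, hzb'⟩ := hsub hz
  obtain rfl | rfl : i = ⟨b.val, by omega⟩ ∨ i = ⟨1 - b.val, by omega⟩ := by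
    simp only [Fin.ext_iff]; omega
  · simp only [hzb, true_iff]; omega
  · simp only [hzb', false_iff]; omega

/-- For `n = 1` the parity classes `{b}` lie in blocks, so `P b` must miss a witness of `{b}`:
it is taken to be the inner half of a ball of such points. -/
theorem exists_parityCore_one [Nontrivial E] {U : Fin (2*1) → Set E} (hUo : ∀ i, IsOpen (U i))
    (hUc : ∀ i, Convex ℝ (U i)) (hU : codeOf U = Tcode 1) :
    ∃ P : Fin 2 → Set E, (∀ b, IsOpen (P b)) ∧ (∀ b, Convex ℝ (P b)) ∧ IsParityCore U P := by
  choose c r hr hcw using exists_ball_forall_mem_iff_of_Tcode_one hUo hUc hU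
  have hhalf : ∀ b, ball (c b) (r b / 2) ⊆ ball (c b) (r b) := fun b =>
    ball_subset_ball (by linarith [hr b])
  refine ⟨fun b => ball (c b) (r b / 2), fun b => isOpen_ball, fun b => convex_ball _ _,
    ⟨fun b => ⟨c b, mem_ball_self (half_pos (hr b))⟩, fun b y hy => hcw b y (hhalf b hy),
      fun _ _ _ _ _ _ => by omega, fun τ hτ => ?_⟩⟩
  obtain ⟨y, hy⟩ := mem_codeOf_iff.1 (hU ▸ hτ.mem_Tcode)
  by_cases hyP : ∃ b, y ∈ ball (c b) (r b / 2)
  swap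
  · push Not at hyP
    exact ⟨y, hyP, hy⟩
  obtain ⟨b, hb⟩ := hyP
  obtain ⟨z, hz⟩ :=
    (NormedSpace.sphere_nonempty (x := c b)).2 (by linarith [hr b] : 0 ≤ 3 * r b / 4)
  rw [mem_sphere] at hz
  have hzb : z ∈ ball (c b) (r b) := by rw [mem_ball, hz]; linarith [hr b]
  refine ⟨z, fun b' hb' => ?_, ?_⟩
  · by_cases hbb : b' = b
    · subst hbb
      rw [mem_ball, hz] at hb'
      linarith [hr b']
    · have hb'2 := b'.isLt
      have := (hcw b z hzb ⟨b'.val, by omega⟩).1 ((hcw b' z (hhalf b' hb') _).2 (by simp; omega))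
      exact hbb (Fin.ext (by simp at this; omega))
  · rw [← hy]
    ext i
    simp [hcw b z hzb i, hcw b y (hhalf b hb) i]

theorem exists_parityCore [ProperSpace E] (hn : 1 ≤ n) {U : Fin (2*n) → Set E}
    (hUo : ∀ i, IsOpen (U i)) (hUc : ∀ i, Convex ℝ (U i)) (hU : codeOf U = Tcode n) :
    ∃ P : Fin 2 → Set E, (∀ b, IsOpen (P b)) ∧ (∀ b, Convex ℝ (P b)) ∧ IsParityCore U P := by
  obtain rfl | hn2 : n = 1 ∨ 2 ≤ n := by omega
  · have : Nontrivial E := nontrivial_of_codeOf (hU ▸ empty_mem_Tcode 1)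
      (hU ▸ singleton_mem_Tcode 0) (Finset.singleton_nonempty _).ne_empty.symm
    exact exists_parityCore_one hUo hUc hU
  · exact ⟨_, fun b => isOpen_iInter_of_finite fun i => isOpen_iInter_of_finite fun _ => hUo i,
      fun b => convex_iInter fun i => convex_iInter fun _ => hUc i, isParityCore_iInter hn2 hU⟩

end Cores

theorem hasOpenRealization_of_continuousLinearEquiv {F : Type*} [AddCommGroup F] [Module ℝ F]
    [TopologicalSpace F] {m d : ℕ} (e : EuclideanSpace ℝ (Fin d) ≃L[ℝ] F) {W : Fin m → Set F}
    (hc : ∀ i, Convex ℝ (W i)) (ho : ∀ i, IsOpen (W i)) : HasOpenRealization m (codeOf W) d :=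
  ⟨fun i => e ⁻¹' W i, fun i => (hc i).linear_preimage e.toLinearEquiv.toLinearMap,
    fun i => (ho i).preimage e.continuous, codeOf_preimage e.surjective W⟩

theorem hasOpenRealization_Tcode_of_succ {n d : ℕ}
    (h : HasOpenRealization (2*(n+1)) (Tcode (n+1)) d) : HasOpenRealization (2*n) (Tcode n) d := by
  obtain ⟨W, hc, ho, hW⟩ := h
  exact ⟨W ∘ Fin.castLE (by omega), fun i => hc _, fun i => ho _,
    by rw [codeOf_comp, hW, Tcode_restrict]⟩

theorem exists_realization_Tcode_succ {E : Type*} [NormedAddCommGroup E] [NormedSpace ℝ E]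
    [ProperSpace E] {n : ℕ} (hn : 1 ≤ n) {U : Fin (2*n) → Set E} (hUo : ∀ i, IsOpen (U i))
    (hUc : ∀ i, Convex ℝ (U i)) (hU : codeOf U = Tcode n) :
    ∃ W : Fin (2*(n+1)) → Set (E × ℝ),
      (∀ i, Convex ℝ (W i)) ∧ (∀ i, IsOpen (W i)) ∧ codeOf W = Tcode (n+1) := by
  obtain ⟨R, hR, hUR⟩ := exists_codeOf_inter_ball U (hU ▸ empty_mem_Tcode n)
  set V := fun i => U i ∩ ball 0 R
  have hVo : ∀ i, IsOpen (V i) := fun i => (hUo i).inter isOpen_ball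
  have hVc : ∀ i, Convex ℝ (V i) := fun i => (hUc i).inter (convex_ball _ _)
  obtain ⟨P, hPo, hPc, hP⟩ := exists_parityCore hn hVo hVc (hUR.trans hU)
  have hV'o := extendFamily_induction hVo hPo
  have hV'c := extendFamily_induction (p := Convex ℝ) hVc hPc
  have hnew : ∀ s ∈ newBlock n, (extendFamily V P s).Nonempty ∧ extendFamily V P s ⊆ ball 0 R :=
    fun s hs =>
      ⟨hP.nonempty_extendFamily hs, (hP.extendFamily_subset hn hs).trans inter_subset_right⟩
  refine ⟨liftFamily (extendFamily V P) (newBlock n) R, convex_liftFamily hV'c,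
    isOpen_liftFamily hV'o, codeOf_liftFamily hV'o hV'c hnew hR
      (fun s hs t ht => hP.disjoint_extendFamily hn hs ht) (fun _ hσ _ hτ => Tcode_inter_mem hσ hτ)
      (hP.codeOf_extendFamily_subset hn) (fun σ hσ => ((inOneBlock_newBlock n).mono hσ).mem_Tcode)
      (fun σ hσ => hP.mem_codeOf_extendFamily hn hσ)⟩

/-- Monotonicity of the tangled sunflower codes: a realization of `T (n+1)` in `ℝ^d` gives
one of `T n` in `ℝ^d`, and a realization of `T n` in `ℝ^d` gives one of `T (n+1)` in
`ℝ^(d+1)`; hence `t n ≤ t (n+1) ≤ t n + 1`. -/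
theorem Tcode_monotone (n d : ℕ) (hn : 1 ≤ n) :
    (HasOpenRealization (2*(n+1)) (Tcode (n+1)) d →
      HasOpenRealization (2*n) (Tcode n) d) ∧
    (HasOpenRealization (2*n) (Tcode n) d →
      HasOpenRealization (2*(n+1)) (Tcode (n+1)) (d+1)) := by
  refine ⟨hasOpenRealization_Tcode_of_succ, fun ⟨U, hUc, hUo, hU⟩ => ?_⟩
  obtain ⟨W, hWc, hWo, hW⟩ := exists_realization_Tcode_succ hn hUo hUc hU
  have e : EuclideanSpace ℝ (Fin (d+1)) ≃L[ℝ] EuclideanSpace ℝ (Fin d) × ℝ :=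
    ContinuousLinearEquiv.ofFinrankEq (by simp)
  exact hW ▸ hasOpenRealization_of_continuousLinearEquiv e hWc hWo
end
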